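/- arXiv:0711.1738 — 6 statements merged into one kernel-verified Lean document; each statement's English description precedes it below -/
import Mathlib

section
/- Fortuin–Kasteleyn representation of the Potts model: Let G be a finite simple graph with vertex set V and edge set E, let R be a commutative ring, let v : E → R assign a weight to each edge, and let q be a positive integer. Then Σ_{σ : V → Fin q} ∏_{e = {i,j} ∈ E} (1 + v(e)·δ(σ(i),σ(j))) = Σ_{A ⊆ E} (q : R)^{k(A)} · ∏_{e ∈ A} v(e), where δ(a,b) equals 1 if a = b and 0 otherwise, and k(A) is the number of connected components of the spanning subgraph of G with vertex set V and edge set A (isolated vertices counting as components). -/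
open Finset SimpleGraph

lemma walk_const {V : Type*} {H : SimpleGraph V} {q : ℕ} {σ : V → Fin q}
    (hσ : ∀ i j, H.Adj i j → σ i = σ j) : ∀ {a b : V} (p : H.Walk a b), σ a = σ b := by
  intro a b p
  induction p with
  | nil => rfl
  | cons h _ ih => exact (hσ _ _ h).trans ih

lemma count_aux {V : Type*} [Fintype V] [DecidableEq V] (H : SimpleGraph V)
    [DecidableRel H.Adj] (q : ℕ) :
    Nat.card {σ : V → Fin q // ∀ i j, H.Adj i j → σ i = σ j}
      = q ^ Nat.card H.ConnectedComponent := by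
  have e : {σ : V → Fin q // ∀ i j, H.Adj i j → σ i = σ j}
      ≃ (H.ConnectedComponent → Fin q) :=
    { toFun := fun σ => ConnectedComponent.lift σ.1 (fun a b p _ => walk_const σ.2 p)
      invFun := fun f => ⟨fun x => f (H.connectedComponentMk x),
        fun i j h => congrArg f (ConnectedComponent.sound h.reachable)⟩
      left_inv := fun σ => rfl
      right_inv := fun f => funext (ConnectedComponent.ind fun x => rfl) }
  rw [Nat.card_congr e]
  classical
  rw [Nat.card_eq_fintype_card, Nat.card_eq_fintype_card, Fintype.card_fun, Fintype.card_fin]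

/-- **Fortuin–Kasteleyn representation of the Potts model.**
For a finite simple graph `G` on vertex set `V`, a commutative ring `R`,
edge weights `v : Sym2 V → R` and a positive integer `q`, the Potts partition
function equals the subgraph expansion
`∑_{A ⊆ E} q^{k(A)} ∏_{e ∈ A} v(e)`, where `k(A)` is the number of connected
components of the spanning subgraph with edge set `A`. -/
theorem fortuin_kasteleyn {V : Type*} [Fintype V] [DecidableEq V]
    (G : SimpleGraph V) [DecidableRel G.Adj]
    {R : Type*} [CommRing R] (v : Sym2 V → R) (q : ℕ) (hq : 0 < q) :
    ∑ σ : V → Fin q, ∏ e ∈ G.edgeFinset,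
      (1 + v e * Sym2.lift ⟨fun i j => if σ i = σ j then (1 : R) else 0,
          fun i j => by simp [eq_comm]⟩ e)
    = ∑ A ∈ G.edgeFinset.powerset,
        (q : R) ^ (Nat.card (SimpleGraph.fromEdgeSet (↑A : Set (Sym2 V))).ConnectedComponent)
          * ∏ e ∈ A, v e := by
  classical
  -- notation
  set δ : (V → Fin q) → Sym2 V → R := fun σ =>
    Sym2.lift ⟨fun i j => if σ i = σ j then (1 : R) else 0, fun i j => by simp [eq_comm]⟩
    with hδ
  have expand : ∀ σ : V → Fin q,
      ∏ e ∈ G.edgeFinset, (1 + v e * δ σ e)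
        = ∑ A ∈ G.edgeFinset.powerset, ∏ e ∈ A, (v e * δ σ e) := by
    intro σ
    have h0 : ∀ e ∈ G.edgeFinset, (1 + v e * δ σ e) = (v e * δ σ e + 1) := fun e _ => add_comm _ _
    rw [Finset.prod_congr rfl h0, Finset.prod_add]
    refine Finset.sum_congr rfl fun A hA => ?_
    simp
  calc ∑ σ : V → Fin q, ∏ e ∈ G.edgeFinset, (1 + v e * δ σ e)
      = ∑ A ∈ G.edgeFinset.powerset, ∑ σ : V → Fin q, ∏ e ∈ A, (v e * δ σ e) := by
        simp_rw [expand]; exact Finset.sum_comm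
    _ = _ := ?_
  refine Finset.sum_congr rfl fun A hA => ?_
  have key : ∀ σ : V → Fin q, ∏ e ∈ A, δ σ e
      = if (∀ i j : V, (fromEdgeSet (↑A : Set (Sym2 V))).Adj i j → σ i = σ j)
        then (1:R) else 0 := by
    intro σ
    have h1 : ∀ e ∈ A, δ σ e = if (Sym2.lift ⟨fun i j => σ i = σ j,
        fun i j => by simp [eq_comm]⟩ e) then (1:R) else 0 := by
      intro e _
      induction e using Sym2.ind with
      | _ i j => simp only [hδ, Sym2.lift_mk]; by_cases h : σ i = σ j <;> simp [h]
    rw [Finset.prod_congr rfl h1, Finset.prod_boole]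
    congr 1
    simp only [eq_iff_iff]
    constructor
    · intro h i j hij
      rw [fromEdgeSet_adj] at hij
      exact h _ (by exact_mod_cast hij.1)
    · intro h e he
      induction e using Sym2.ind with
      | _ i j =>
        simp only [Sym2.lift_mk]
        by_cases hij : i = j
        · subst hij; rfl
        · exact h i j (by rw [fromEdgeSet_adj]; exact ⟨by exact_mod_cast he, hij⟩)
  have : ∑ σ : V → Fin q, ∏ e ∈ A, (v e * δ σ e)
      = (∏ e ∈ A, v e) * ∑ σ : V → Fin q, ∏ e ∈ A, δ σ e := by
    rw [Finset.mul_sum]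
    refine Finset.sum_congr rfl fun σ _ => ?_
    rw [Finset.prod_mul_distrib]
  rw [this]
  simp_rw [key]
  rw [Finset.sum_boole]
  have card_eq : (Finset.univ.filter fun σ : V → Fin q =>
      ∀ i j : V, (fromEdgeSet (↑A : Set (Sym2 V))).Adj i j → σ i = σ j).card
      = q ^ Nat.card (fromEdgeSet (↑A : Set (Sym2 V))).ConnectedComponent := by
    rw [← count_aux (fromEdgeSet (↑A : Set (Sym2 V))) q, Nat.card_eq_fintype_card,
      Fintype.card_subtype]
  rw [card_eq]
  push_cast
  ring
end

section
/- Let N ≥ 1 and R > 0, and let M : ℂ → Matrix (Fin N) (Fin N) ℂ be such that each entry ξ ↦ M(ξ)_{ij} is analytic on the open disc {ξ : |ξ| < R}, the (1,1) entry satisfies M(ξ)_{11} = 1 for all |ξ| < R, and for every index pair (i,j) ≠ (1,1) there is a constant c_{ij} ≥ 0 with |M(ξ)_{ij}| ≤ c_{ij}·|ξ| for all |ξ| < R. Then there exist R' with 0 < R' ≤ R, a constant C ≥ 0, and functions μ : ℂ → ℂ and w : ℂ → (Fin N → ℂ), analytic on {|ξ| < R'}, such that: (i) μ(0) = 1 and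 the derivative of μ at 0 equals 0 (so μ(ξ) = 1 + O(ξ²)); (ii) w(0) is the first standard basis vector e₁; (iii) M(ξ)·w(ξ) = μ(ξ)·w(ξ) for all |ξ| < R'; (iv) for each |ξ| < R', μ(ξ) is a root of multiplicity one of the characteristic polynomial of M(ξ); and (v) every eigenvalue λ of M(ξ) with λ ≠ μ(ξ) satisfies |λ| ≤ C·|ξ|. -/
/-!
Write `M(ξ) = E + B(ξ)`, where `E = single i₀ i₀ 1` is a matrix unit and the entries of `B(ξ)`
are `O(ξ)`. On vectors with `v i₀ = 1` and `‖v‖ ≤ 2`, the normalised power step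
`v ↦ M v / (M v) i₀` is a `1/2`-contraction once `|ξ|` is small, uniformly in `ξ`. Its iterates
from `e_{i₀}` are holomorphic in `ξ` and converge uniformly, so the limit `w(ξ)` is holomorphic,
and `M w = μ w` with `μ = (M w) i₀`. Both `w - e_{i₀}` and row `i₀` of `B` are `O(ξ)`, whence
`μ = 1 + O(ξ²)`. By Gershgorin every eigenvalue lies within `N ε` of `0` or of `1`, where
`ε = O(ξ)` bounds the entries of `B`; as the eigenvalues add up to `tr M = 1 + O(ξ)`, exactly one
of them, counted with multiplicity, lies near `1`, and that one is `μ`.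
-/

open Filter Topology Metric Polynomial

theorem inv_smul_sub_inv_smul {K V : Type*} [Field K] [AddCommGroup V] [Module K V] {a b : K}
    (ha : a ≠ 0) (hb : b ≠ 0) (u v : V) :
    a⁻¹ • u - b⁻¹ • v = a⁻¹ • (u - v - (a - b) • b⁻¹ • v) := by
  have h : a⁻¹ * (a - b) * b⁻¹ = b⁻¹ - a⁻¹ := by field_simp
  rw [smul_sub, smul_sub, smul_smul, smul_smul, h, sub_smul]
  abel

theorem Multiset.card_filter_norm_sub_one_le_eq_one {s : Multiset ℂ} {δ : ℝ}
    (hs : ∀ z ∈ s, ‖z‖ ≤ δ ∨ ‖z - 1‖ ≤ δ) (hsum : ‖s.sum - 1‖ ≤ δ)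
    (hδ : (card s + 1) * δ < 1) :
    card (s.filter fun z => ‖z - 1‖ ≤ δ) = 1 := by
  set F := s.filter fun z => ‖z - 1‖ ≤ δ
  set G := s.filter fun z => ¬‖z - 1‖ ≤ δ
  have hFG : F + G = s := filter_add_not _ _
  have hF : ‖F.sum - card F‖ ≤ card F * δ := by
    have h : F.sum - card F = (F.map (· - 1)).sum := by simp [Multiset.sum_map_sub]
    rw [h]
    refine (norm_multiset_sum_le _).trans ?_
    rw [map_map]
    exact (sum_le_card_nsmul (F.map fun z => ‖z - 1‖) δ
      (forall_mem_map_iff.2 fun z hz => (mem_filter.1 hz).2)).trans_eq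
      (by rw [card_map, nsmul_eq_mul])
  have hG : ‖G.sum‖ ≤ card G * δ := by
    refine (norm_multiset_sum_le _).trans ?_
    exact (sum_le_card_nsmul (G.map norm) δ (forall_mem_map_iff.2 fun z hz =>
      (hs z (mem_filter.1 hz).1).resolve_right (mem_filter.1 hz).2)).trans_eq
      (by rw [card_map, nsmul_eq_mul])
  have hcard : (card F : ℝ) + card G = card s := by rw [← hFG, card_add]; push_cast; ring
  have hlt : ‖((card F : ℝ) - 1 : ℂ)‖ < 1 := by
    calc ‖((card F : ℝ) - 1 : ℂ)‖ = ‖(s.sum - 1) - (F.sum - card F) - G.sum‖ := by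
          rw [← hFG, sum_add]; push_cast; ring_nf
      _ ≤ δ + card F * δ + card G * δ := by
          refine (norm_sub_le _ _).trans (add_le_add ((norm_sub_le _ _).trans ?_) hG)
          exact add_le_add hsum hF
      _ < 1 := by nlinarith
  rw [← Complex.ofReal_one, ← Complex.ofReal_sub, Complex.norm_real, Real.norm_eq_abs,
    abs_lt] at hlt
  have h0 : 0 < card F := by exact_mod_cast (by linarith : (0 : ℝ) < card F)
  have h2 : card F < 2 := by exact_mod_cast (by linarith : (card F : ℝ) < 2)
  omega

namespace Matrix

variable {ι : Type*} [Fintype ι]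

theorem norm_mulVec_le_card_mul [Nonempty ι] {B : Matrix ι ι ℂ} {ε : ℝ}
    (hB : ∀ i j, ‖B i j‖ ≤ ε) (v : ι → ℂ) :
    ‖B *ᵥ v‖ ≤ Fintype.card ι * ε * ‖v‖ := by
  refine (pi_norm_le_iff_of_nonempty _).2 fun i => ?_
  have hε : 0 ≤ ε := (norm_nonneg _).trans (hB i i)
  calc ‖(B *ᵥ v) i‖ ≤ ∑ j, ‖B i j * v j‖ := norm_sum_le _ _
    _ ≤ ∑ _j : ι, ε * ‖v‖ := by
        gcongr with j
        rw [norm_mul]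
        exact mul_le_mul (hB i j) (norm_le_pi_norm v j) (norm_nonneg _) hε
    _ = Fintype.card ι * ε * ‖v‖ := by simp [mul_assoc]

theorem differentiableOn_mulVec {U : Set ℂ} {A : ℂ → Matrix ι ι ℂ} {v : ℂ → ι → ℂ}
    (hAd : ∀ i j, DifferentiableOn ℂ (fun ξ => A ξ i j) U) (hv : DifferentiableOn ℂ v U) :
    DifferentiableOn ℂ (fun ξ => A ξ *ᵥ v ξ) U :=
  differentiableOn_pi.2 fun i =>
    DifferentiableOn.fun_sum fun j _ => (hAd i j).mul (differentiableOn_pi.1 hv j)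

variable (i0 : ι)

noncomputable def normalizedPowerStep (A : Matrix ι ι ℂ) (v : ι → ℂ) : ι → ℂ :=
  ((A *ᵥ v) i0)⁻¹ • (A *ᵥ v)

def powerIterationDomain : Set (ι → ℂ) := {v | v i0 = 1 ∧ ‖v‖ ≤ 2}

theorem isClosed_powerIterationDomain : IsClosed (powerIterationDomain i0) :=
  (isClosed_eq (continuous_apply i0) continuous_const).inter
    (isClosed_le continuous_norm continuous_const)

variable [DecidableEq ι]

def NearSingle (ε : ℝ) (A : Matrix ι ι ℂ) : Prop :=
  ∀ i j, ‖(A - single i0 i0 (1 : ℂ) : Matrix ι ι ℂ) i j‖ ≤ ε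

-- a junk value unless the iterates converge, as they do for `NearSingle i0 ε A` with small `ε`
noncomputable def dominantEigenvector (A : Matrix ι ι ℂ) : ι → ℂ :=
  limUnder atTop fun n => (normalizedPowerStep i0 A)^[n] (Pi.single i0 1)

noncomputable def dominantEigenvalue (A : Matrix ι ι ℂ) : ℂ :=
  (A *ᵥ dominantEigenvector i0 A) i0

variable {i0} {A : Matrix ι ι ℂ} {ε : ℝ}

theorem single_mem_powerIterationDomain : Pi.single i0 1 ∈ powerIterationDomain i0 := by
  simp [powerIterationDomain, Pi.norm_single]

theorem NearSingle.nonneg (hA : NearSingle i0 ε A) : 0 ≤ Fintype.card ι * ε :=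
  mul_nonneg (Nat.cast_nonneg _) ((norm_nonneg _).trans (hA i0 i0))

theorem NearSingle.norm_mulVec_sub_single_le (hA : NearSingle i0 ε A) (v : ι → ℂ) :
    ‖A *ᵥ v - Pi.single i0 (v i0)‖ ≤ Fintype.card ι * ε * ‖v‖ := by
  have : Nonempty ι := ⟨i0⟩
  have h := norm_mulVec_le_card_mul hA v
  rwa [sub_mulVec, single_mulVec, one_mul] at h

theorem NearSingle.norm_mulVec_apply_sub_one_le (hA : NearSingle i0 ε A) {v : ι → ℂ}
    (hv : v ∈ powerIterationDomain i0) :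
    ‖(A *ᵥ v) i0 - 1‖ ≤ 2 * (Fintype.card ι * ε) := by
  have h := norm_le_pi_norm (A *ᵥ v - Pi.single i0 1) i0
  rw [Pi.sub_apply, Pi.single_eq_same] at h
  have hu := hA.norm_mulVec_sub_single_le v
  rw [hv.1] at hu
  nlinarith [hv.2, hA.nonneg]

theorem NearSingle.half_le_norm_mulVec_apply (hA : NearSingle i0 ε A) {v : ι → ℂ}
    (hv : v ∈ powerIterationDomain i0) (hε : 4 * (Fintype.card ι * ε) ≤ 1) :
    1 / 2 ≤ ‖(A *ᵥ v) i0‖ := by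
  have h := hA.norm_mulVec_apply_sub_one_le hv
  have := norm_sub_norm_le (1 : ℂ) ((A *ᵥ v) i0)
  rw [norm_one, norm_sub_rev] at this
  linarith

theorem NearSingle.mulVec_apply_ne_zero (hA : NearSingle i0 ε A) {v : ι → ℂ}
    (hv : v ∈ powerIterationDomain i0) (hε : 4 * (Fintype.card ι * ε) ≤ 1) :
    (A *ᵥ v) i0 ≠ 0 :=
  norm_pos_iff.1 ((hA.half_le_norm_mulVec_apply hv hε).trans_lt' one_half_pos)

theorem NearSingle.norm_inv_mulVec_apply_le (hA : NearSingle i0 ε A) {v : ι → ℂ}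
    (hv : v ∈ powerIterationDomain i0) (hε : 4 * (Fintype.card ι * ε) ≤ 1) :
    ‖((A *ᵥ v) i0)⁻¹‖ ≤ 2 := by
  rw [norm_inv]
  exact inv_le_of_inv_le₀ two_pos (by simpa using hA.half_le_norm_mulVec_apply hv hε)

theorem NearSingle.norm_normalizedPowerStep_sub_single_le (hA : NearSingle i0 ε A)
    {v : ι → ℂ} (hv : v ∈ powerIterationDomain i0) (hε : 4 * (Fintype.card ι * ε) ≤ 1) :
    ‖normalizedPowerStep i0 A v - Pi.single i0 1‖ ≤ 4 * (Fintype.card ι * ε) * ‖v‖ := by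
  have hu : ‖A *ᵥ v - Pi.single i0 1‖ ≤ Fintype.card ι * ε * ‖v‖ := by
    simpa [hv.1] using hA.norm_mulVec_sub_single_le v
  have ha : ‖(A *ᵥ v) i0 - 1‖ ≤ ‖A *ᵥ v - Pi.single i0 1‖ := by
    have := norm_le_pi_norm (A *ᵥ v - Pi.single i0 1) i0
    rwa [Pi.sub_apply, Pi.single_eq_same] at this
  have h := inv_smul_sub_inv_smul (hA.mulVec_apply_ne_zero hv hε) one_ne_zero (A *ᵥ v)
    (Pi.single i0 1)
  simp only [inv_one, one_smul] at h
  rw [normalizedPowerStep, h, norm_smul]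
  calc _ ≤ 2 * (‖A *ᵥ v - Pi.single i0 1‖ + ‖(A *ᵥ v) i0 - 1‖) := by
        gcongr
        · exact hA.norm_inv_mulVec_apply_le hv hε
        refine (norm_sub_le _ _).trans_eq ?_
        rw [norm_smul, Pi.norm_single, norm_one, mul_one]
    _ ≤ 4 * (Fintype.card ι * ε) * ‖v‖ := by linarith

theorem NearSingle.mapsTo_normalizedPowerStep (hA : NearSingle i0 ε A)
    (hε : 8 * (Fintype.card ι * ε) ≤ 1) :
    Set.MapsTo (normalizedPowerStep i0 A) (powerIterationDomain i0) (powerIterationDomain i0) := by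
  intro v hv
  refine ⟨inv_mul_cancel₀ (hA.mulVec_apply_ne_zero hv (by linarith)), ?_⟩
  have h := hA.norm_normalizedPowerStep_sub_single_le hv (by linarith)
  have := norm_le_norm_add_norm_sub' (normalizedPowerStep i0 A v) (Pi.single i0 (1 : ℂ))
  rw [Pi.norm_single, norm_one] at this
  nlinarith [hv.2, hA.nonneg]

theorem NearSingle.lipschitzOnWith_normalizedPowerStep (hA : NearSingle i0 ε A)
    (hε : 12 * (Fintype.card ι * ε) ≤ 1) :
    LipschitzOnWith 2⁻¹ (normalizedPowerStep i0 A) (powerIterationDomain i0) := by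
  refine LipschitzOnWith.of_dist_le_mul fun v hv v' hv' => ?_
  rw [dist_eq_norm, dist_eq_norm, NNReal.coe_inv, NNReal.coe_ofNat]
  -- since `(v - v') i0 = 0`, only `A - single i0 i0 1` acts on `v - v'`
  have hd : ‖A *ᵥ v - A *ᵥ v'‖ ≤ Fintype.card ι * ε * ‖v - v'‖ := by
    simpa [← mulVec_sub, hv.1, hv'.1] using hA.norm_mulVec_sub_single_le (v - v')
  have ha : ‖(A *ᵥ v) i0 - (A *ᵥ v') i0‖ ≤ ‖A *ᵥ v - A *ᵥ v'‖ := by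
    simpa using norm_le_pi_norm (A *ᵥ v - A *ᵥ v') i0
  have hT : ‖normalizedPowerStep i0 A v'‖ ≤ 2 := (hA.mapsTo_normalizedPowerStep (by linarith) hv').2
  rw [normalizedPowerStep, normalizedPowerStep, inv_smul_sub_inv_smul
    (hA.mulVec_apply_ne_zero hv (by linarith)) (hA.mulVec_apply_ne_zero hv' (by linarith)),
    norm_smul]
  calc _ ≤ 2 * (‖A *ᵥ v - A *ᵥ v'‖ + ‖A *ᵥ v - A *ᵥ v'‖ * 2) := by
        gcongr
        · exact hA.norm_inv_mulVec_apply_le hv (by linarith)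
        refine (norm_sub_le _ _).trans ?_
        rw [norm_smul]
        gcongr
        exact hT
    _ ≤ 2⁻¹ * ‖v - v'‖ := by nlinarith [norm_nonneg (v - v'), hA.nonneg]

theorem NearSingle.dist_iterate_succ_le (hA : NearSingle i0 ε A)
    (hε : 12 * (Fintype.card ι * ε) ≤ 1) (n : ℕ) :
    dist ((normalizedPowerStep i0 A)^[n] (Pi.single i0 1))
      ((normalizedPowerStep i0 A)^[n + 1] (Pi.single i0 1)) ≤ 2⁻¹ ^ n := by
  have hmaps := hA.mapsTo_normalizedPowerStep (by linarith)
  have h := ((hA.lipschitzOnWith_normalizedPowerStep hε).mapsToRestrict hmaps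
    ).dist_iterate_succ_le_geometric ⟨_, single_mem_powerIterationDomain⟩ n
  simp only [hmaps.iterate_restrict, Subtype.dist_eq, Set.MapsTo.val_restrict_apply] at h
  have h1 : dist (Pi.single i0 1) (normalizedPowerStep i0 A (Pi.single i0 1)) ≤ 1 := by
    rw [dist_comm, dist_eq_norm]
    refine (hA.norm_normalizedPowerStep_sub_single_le single_mem_powerIterationDomain
      (by linarith)).trans ?_
    rw [Pi.norm_single, norm_one]
    linarith
  refine h.trans ?_
  push_cast
  exact mul_le_of_le_one_left (by positivity) h1

theorem NearSingle.tendsto_iterate_dominantEigenvector (hA : NearSingle i0 ε A)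
    (hε : 12 * (Fintype.card ι * ε) ≤ 1) :
    Tendsto (fun n => (normalizedPowerStep i0 A)^[n] (Pi.single i0 1)) atTop
      (𝓝 (dominantEigenvector i0 A)) :=
  (cauchySeq_of_le_geometric 2⁻¹ 1 (by norm_num)
    fun n => (hA.dist_iterate_succ_le hε n).trans_eq (one_mul _).symm).tendsto_limUnder

theorem NearSingle.dist_iterate_dominantEigenvector_le (hA : NearSingle i0 ε A)
    (hε : 12 * (Fintype.card ι * ε) ≤ 1) (n : ℕ) :
    dist ((normalizedPowerStep i0 A)^[n] (Pi.single i0 1)) (dominantEigenvector i0 A) ≤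
      2 * 2⁻¹ ^ n := by
  have h := dist_le_of_le_geometric_of_tendsto 2⁻¹ 1 (by norm_num)
    (fun n => (hA.dist_iterate_succ_le hε n).trans_eq (one_mul _).symm)
    (hA.tendsto_iterate_dominantEigenvector hε) n
  norm_num at h
  linarith

theorem NearSingle.dominantEigenvector_mem (hA : NearSingle i0 ε A)
    (hε : 12 * (Fintype.card ι * ε) ≤ 1) :
    dominantEigenvector i0 A ∈ powerIterationDomain i0 :=
  (isClosed_powerIterationDomain i0).mem_of_tendsto (hA.tendsto_iterate_dominantEigenvector hε)
    (Eventually.of_forall fun n =>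
      (hA.mapsTo_normalizedPowerStep (by linarith)).iterate n single_mem_powerIterationDomain)

theorem NearSingle.dominantEigenvalue_ne_zero (hA : NearSingle i0 ε A)
    (hε : 12 * (Fintype.card ι * ε) ≤ 1) : dominantEigenvalue i0 A ≠ 0 :=
  hA.mulVec_apply_ne_zero (hA.dominantEigenvector_mem hε) (by linarith)

theorem NearSingle.normalizedPowerStep_dominantEigenvector (hA : NearSingle i0 ε A)
    (hε : 12 * (Fintype.card ι * ε) ≤ 1) :
    normalizedPowerStep i0 A (dominantEigenvector i0 A) = dominantEigenvector i0 A := by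
  refine isFixedPt_of_tendsto_iterate (hA.tendsto_iterate_dominantEigenvector hε) ?_
  have hc : Continuous (A *ᵥ ·) := continuous_const.matrix_mulVec continuous_id
  exact (((continuous_apply i0).comp hc).continuousAt.inv₀
    (hA.dominantEigenvalue_ne_zero hε)).smul hc.continuousAt

theorem NearSingle.mulVec_dominantEigenvector (hA : NearSingle i0 ε A)
    (hε : 12 * (Fintype.card ι * ε) ≤ 1) :
    A *ᵥ dominantEigenvector i0 A = dominantEigenvalue i0 A • dominantEigenvector i0 A :=
  (inv_smul_eq_iff₀ (hA.dominantEigenvalue_ne_zero hε)).1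
    (hA.normalizedPowerStep_dominantEigenvector hε)

theorem NearSingle.norm_dominantEigenvector_sub_single_le (hA : NearSingle i0 ε A)
    (hε : 12 * (Fintype.card ι * ε) ≤ 1) :
    ‖dominantEigenvector i0 A - Pi.single i0 1‖ ≤ 8 * (Fintype.card ι * ε) := by
  have hw := hA.dominantEigenvector_mem hε
  rw [← hA.normalizedPowerStep_dominantEigenvector hε]
  nlinarith [hA.norm_normalizedPowerStep_sub_single_le hw (by linarith), hw.2, hA.nonneg]

theorem NearSingle.norm_dominantEigenvalue_sub_one_le_sq (hA : NearSingle i0 ε A)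
    (hA1 : A i0 i0 = 1) (hε : 12 * (Fintype.card ι * ε) ≤ 1) :
    ‖dominantEigenvalue i0 A - 1‖ ≤ 8 * (Fintype.card ι * ε) ^ 2 := by
  have : Nonempty ι := ⟨i0⟩
  set w := dominantEigenvector i0 A
  have hw := hA.dominantEigenvector_mem hε
  have h : dominantEigenvalue i0 A - 1 =
      ((A - single i0 i0 1) *ᵥ (w - Pi.single i0 1)) i0 := by
    simp [dominantEigenvalue, w, sub_mulVec, mulVec_sub, single_mulVec, hw.1, hA1]
  rw [h]
  calc _ ≤ ‖(A - single i0 i0 1) *ᵥ (w - Pi.single i0 1)‖ := norm_le_pi_norm _ i0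
    _ ≤ Fintype.card ι * ε * ‖w - Pi.single i0 1‖ := norm_mulVec_le_card_mul hA _
    _ ≤ 8 * (Fintype.card ι * ε) ^ 2 := by
        nlinarith [hA.norm_dominantEigenvector_sub_single_le hε, hA.nonneg]

theorem exists_norm_sub_le_of_isRoot_charpoly {K : Type*} [NormedField K] {B : Matrix ι ι K}
    {μ : K} (hμ : B.charpoly.IsRoot μ) (d : ι → K) :
    ∃ k, ‖μ - d k‖ ≤ ∑ j, ‖(B - diagonal d) k j‖ := by
  have heig : Module.End.HasEigenvalue (toLin' B) μ := by
    rwa [Module.End.hasEigenvalue_iff_isRoot_charpoly, charpoly_toLin']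
  obtain ⟨k, hk⟩ := eigenvalue_mem_ball heig
  rw [mem_closedBall, dist_eq_norm] at hk
  refine ⟨k, ?_⟩
  have hoff : ∑ j ∈ Finset.univ.erase k, ‖(B - diagonal d) k j‖ =
      ∑ j ∈ Finset.univ.erase k, ‖B k j‖ :=
    Finset.sum_congr rfl fun j hj => by
      rw [sub_apply, diagonal_apply_ne _ (Finset.ne_of_mem_erase hj).symm, sub_zero]
  rw [← Finset.add_sum_erase _ _ (Finset.mem_univ k), hoff, sub_apply, diagonal_apply_eq]
  linarith [norm_sub_le_norm_sub_add_norm_sub μ (B k k) (d k)]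

theorem NearSingle.norm_le_or_norm_sub_one_le (hA : NearSingle i0 ε A) {μ : ℂ}
    (hμ : A.charpoly.IsRoot μ) :
    ‖μ‖ ≤ Fintype.card ι * ε ∨ ‖μ - 1‖ ≤ Fintype.card ι * ε := by
  obtain ⟨k, hk⟩ := exists_norm_sub_le_of_isRoot_charpoly hμ (Pi.single i0 1)
  rw [diagonal_single] at hk
  have hrow : ∑ j, ‖(A - single i0 i0 1 : Matrix ι ι ℂ) k j‖ ≤ Fintype.card ι * ε :=
    (Finset.sum_le_sum fun j _ => hA k j).trans_eq (by simp)
  replace hk := hk.trans hrow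
  by_cases hk0 : k = i0
  · subst hk0
    exact .inr (by simpa using hk)
  · exact .inl (by simpa [hk0] using hk)

theorem NearSingle.norm_trace_sub_one_le (hA : NearSingle i0 ε A) :
    ‖A.trace - 1‖ ≤ Fintype.card ι * ε := by
  rw [← trace_single_eq_same i0 (1 : ℂ), ← trace_sub, trace]
  exact (norm_sum_le _ _).trans ((Finset.sum_le_sum fun i _ => hA i i).trans_eq (by simp))

theorem NearSingle.isRoot_charpoly_dominantEigenvalue (hA : NearSingle i0 ε A)
    (hε : 12 * (Fintype.card ι * ε) ≤ 1) :
    A.charpoly.IsRoot (dominantEigenvalue i0 A) := by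
  rw [← charpoly_toLin', ← Module.End.hasEigenvalue_iff_isRoot_charpoly]
  refine Module.End.hasEigenvalue_of_hasEigenvector (x := dominantEigenvector i0 A) ⟨?_, ?_⟩
  · rw [Module.End.mem_eigenspace_iff, toLin'_apply, hA.mulVec_dominantEigenvector hε]
  · exact fun h => by simpa [h] using (hA.dominantEigenvector_mem hε).1

theorem NearSingle.norm_dominantEigenvalue_sub_one_le (hA : NearSingle i0 ε A)
    (hε : 12 * (Fintype.card ι * ε) ≤ 1) :
    ‖dominantEigenvalue i0 A - 1‖ ≤ Fintype.card ι * ε := by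
  refine (hA.norm_le_or_norm_sub_one_le (hA.isRoot_charpoly_dominantEigenvalue hε)).resolve_left
    fun h => ?_
  have h2 : ‖dominantEigenvalue i0 A - 1‖ ≤ 2 * (Fintype.card ι * ε) :=
    hA.norm_mulVec_apply_sub_one_le (hA.dominantEigenvector_mem hε)
  have := norm_sub_norm_le 1 (dominantEigenvalue i0 A)
  rw [norm_one, norm_sub_rev] at this
  linarith

theorem NearSingle.filter_roots_charpoly_eq_singleton (hA : NearSingle i0 ε A)
    (hε : 12 * (Fintype.card ι * ε) ≤ 1)
    (hcard : (Fintype.card ι + 1) * (Fintype.card ι * ε) < 1) :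
    A.charpoly.roots.filter (fun z => ‖z - 1‖ ≤ Fintype.card ι * ε) =
      {dominantEigenvalue i0 A} := by
  have hroots : Multiset.card A.charpoly.roots = Fintype.card ι := by
    rw [splits_iff_card_roots.1 (IsAlgClosed.splits _), charpoly_natDegree_eq_dim]
  obtain ⟨x, hx⟩ := Multiset.card_eq_one.1 <| Multiset.card_filter_norm_sub_one_le_eq_one
    (fun z hz => hA.norm_le_or_norm_sub_one_le (isRoot_of_mem_roots hz))
    (trace_eq_sum_roots_charpoly A ▸ hA.norm_trace_sub_one_le) (by rwa [hroots])
  have hmem : dominantEigenvalue i0 A ∈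
      A.charpoly.roots.filter (fun z => ‖z - 1‖ ≤ Fintype.card ι * ε) :=
    Multiset.mem_filter.2 ⟨(mem_roots A.charpoly_monic.ne_zero).2
      (hA.isRoot_charpoly_dominantEigenvalue hε), hA.norm_dominantEigenvalue_sub_one_le hε⟩
  rw [hx, Multiset.mem_singleton] at hmem
  rw [hx, hmem]

theorem NearSingle.rootMultiplicity_charpoly_dominantEigenvalue (hA : NearSingle i0 ε A)
    (hε : 12 * (Fintype.card ι * ε) ≤ 1)
    (hcard : (Fintype.card ι + 1) * (Fintype.card ι * ε) < 1) :
    A.charpoly.rootMultiplicity (dominantEigenvalue i0 A) = 1 := by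
  rw [← count_roots, ← Multiset.count_filter_of_pos (p := fun z => ‖z - 1‖ ≤ Fintype.card ι * ε)
    (hA.norm_dominantEigenvalue_sub_one_le hε),
    hA.filter_roots_charpoly_eq_singleton hε hcard, Multiset.count_singleton_self]

theorem NearSingle.norm_le_of_isRoot_charpoly_of_ne (hA : NearSingle i0 ε A)
    (hε : 12 * (Fintype.card ι * ε) ≤ 1)
    (hcard : (Fintype.card ι + 1) * (Fintype.card ι * ε) < 1) {lam : ℂ}
    (hlam : A.charpoly.IsRoot lam) (hne : lam ≠ dominantEigenvalue i0 A) :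
    ‖lam‖ ≤ Fintype.card ι * ε := by
  refine (hA.norm_le_or_norm_sub_one_le hlam).resolve_right fun h => hne ?_
  have hmem : lam ∈ A.charpoly.roots.filter (fun z => ‖z - 1‖ ≤ Fintype.card ι * ε) :=
    Multiset.mem_filter.2 ⟨(mem_roots A.charpoly_monic.ne_zero).2 hlam, h⟩
  rwa [hA.filter_roots_charpoly_eq_singleton hε hcard, Multiset.mem_singleton] at hmem

section Family

variable {U : Set ℂ} {A : ℂ → Matrix ι ι ℂ} {ε : ℂ → ℝ}

theorem exists_forall_nearSingle_mul_norm (h1 : ∀ ξ ∈ U, A ξ i0 i0 = 1)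
    (hb : ∀ i j, (i, j) ≠ (i0, i0) → ∃ c : ℝ, ∀ ξ ∈ U, ‖A ξ i j‖ ≤ c * ‖ξ‖) :
    ∃ K, 0 ≤ K ∧ ∀ ξ ∈ U, NearSingle i0 (K * ‖ξ‖) (A ξ) := by
  have h : ∀ᶠ K in atTop, ∀ i j, ∀ ξ ∈ U,
      ‖(A ξ - single i0 i0 1 : Matrix ι ι ℂ) i j‖ ≤ K * ‖ξ‖ := by
    refine eventually_all.2 fun i => eventually_all.2 fun j => ?_
    by_cases hij : (i, j) = (i0, i0)
    · obtain ⟨rfl, rfl⟩ := Prod.mk.inj hij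
      filter_upwards [eventually_ge_atTop 0] with K hK ξ hξ
      simpa [h1 ξ hξ] using by positivity
    · obtain ⟨c, hc⟩ := hb i j hij
      filter_upwards [eventually_ge_atTop c] with K hK ξ hξ
      have hne : ¬(i0 = i ∧ i0 = j) := fun h => hij (by rw [← h.1, ← h.2])
      rw [sub_apply, single_apply, if_neg hne, sub_zero]
      exact (hc ξ hξ).trans (by gcongr)
  obtain ⟨K, hK0, hK⟩ := ((eventually_ge_atTop 0).and h).exists
  exact ⟨K, hK0, fun ξ hξ i j => hK i j ξ hξ⟩

theorem differentiableOn_iterate_normalizedPowerStep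
    (hAd : ∀ i j, DifferentiableOn ℂ (fun ξ => A ξ i j) U)
    (hA : ∀ ξ ∈ U, NearSingle i0 (ε ξ) (A ξ)) (hε : ∀ ξ ∈ U, 8 * (Fintype.card ι * ε ξ) ≤ 1)
    (n : ℕ) :
    DifferentiableOn ℂ (fun ξ => (normalizedPowerStep i0 (A ξ))^[n] (Pi.single i0 1)) U := by
  induction n with
  | zero => exact differentiableOn_const _
  | succ n ih =>
    simp only [Function.iterate_succ_apply']
    have hmv := differentiableOn_mulVec hAd ih
    refine ((differentiableOn_pi.1 hmv i0).inv fun ξ hξ => ?_).smul hmv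
    exact (hA ξ hξ).mulVec_apply_ne_zero (((hA ξ hξ).mapsTo_normalizedPowerStep (hε ξ hξ)).iterate
      n single_mem_powerIterationDomain) (by linarith [hε ξ hξ])

theorem differentiableOn_dominantEigenvector (hU : IsOpen U)
    (hAd : ∀ i j, DifferentiableOn ℂ (fun ξ => A ξ i j) U)
    (hA : ∀ ξ ∈ U, NearSingle i0 (ε ξ) (A ξ)) (hε : ∀ ξ ∈ U, 12 * (Fintype.card ι * ε ξ) ≤ 1) :
    DifferentiableOn ℂ (fun ξ => dominantEigenvector i0 (A ξ)) U := by
  have hlim : Tendsto (fun n : ℕ => 2 * (2⁻¹ : ℝ) ^ n) atTop (𝓝 0) := by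
    simpa using (tendsto_pow_atTop_nhds_zero_of_lt_one (by norm_num : (0 : ℝ) ≤ 2⁻¹)
      (by norm_num)).const_mul 2
  -- the rate `2 * 2⁻¹ ^ n` does not depend on `ξ`
  have hunif : TendstoUniformlyOn (fun n ξ => (normalizedPowerStep i0 (A ξ))^[n] (Pi.single i0 1))
      (fun ξ => dominantEigenvector i0 (A ξ)) atTop U := by
    refine Metric.tendstoUniformlyOn_iff.2 fun r hr => ?_
    filter_upwards [hlim.eventually (gt_mem_nhds hr)] with n hn ξ hξ
    rw [dist_comm]
    exact ((hA ξ hξ).dist_iterate_dominantEigenvector_le (hε ξ hξ) n).trans_lt hn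
  exact hunif.tendstoLocallyUniformlyOn.differentiableOn (Eventually.of_forall
    (differentiableOn_iterate_normalizedPowerStep hAd hA fun ξ hξ => by linarith [hε ξ hξ])) hU

theorem differentiableOn_dominantEigenvalue (hU : IsOpen U)
    (hAd : ∀ i j, DifferentiableOn ℂ (fun ξ => A ξ i j) U)
    (hA : ∀ ξ ∈ U, NearSingle i0 (ε ξ) (A ξ)) (hε : ∀ ξ ∈ U, 12 * (Fintype.card ι * ε ξ) ≤ 1) :
    DifferentiableOn ℂ (fun ξ => dominantEigenvalue i0 (A ξ)) U :=
  differentiableOn_pi.1 (differentiableOn_mulVec hAd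
    (differentiableOn_dominantEigenvector hU hAd hA hε)) i0

theorem hasDerivAt_dominantEigenvalue_zero {K : ℝ}
    (hA : ∀ᶠ ξ in 𝓝 0, A ξ i0 i0 = 1 ∧ NearSingle i0 (K * ‖ξ‖) (A ξ)) :
    HasDerivAt (fun ξ => dominantEigenvalue i0 (A ξ)) 0 0 := by
  have hsmall : ∀ᶠ ξ in 𝓝 (0 : ℂ), 12 * (Fintype.card ι * (K * ‖ξ‖)) ≤ 1 := by
    have hc : Continuous fun ξ : ℂ => 12 * (Fintype.card ι * (K * ‖ξ‖)) := by fun_prop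
    simpa using (hc.tendsto 0).eventually (eventually_le_nhds (by simp : (_ : ℝ) < 1))
  have hO : (fun ξ => dominantEigenvalue i0 (A ξ) - 1) =O[𝓝 0] fun ξ => ‖ξ - 0‖ ^ 2 := by
    refine Asymptotics.IsBigO.of_bound (8 * (Fintype.card ι * K) ^ 2) ?_
    filter_upwards [hA, hsmall] with ξ ⟨hA1, hAξ⟩ hξ
    refine (hAξ.norm_dominantEigenvalue_sub_one_le_sq hA1 hξ).trans_eq ?_
    simp only [sub_zero, norm_pow, norm_norm]
    ring
  simpa using (hasDerivAt_sub_const_iff 1).1 (hO.hasFDerivAt one_lt_two).hasDerivAt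

end Family

end Matrix

open Matrix

/-- **Perturbation lemma for a nearly rank-one analytic matrix family.**
If `M(ξ)` is an `N × N` matrix family, analytic on the disc `|ξ| < R`, with
`M(ξ)₁₁ = 1` and all other entries `O(ξ)`, then on some smaller disc `|ξ| < R'`
there are analytic `μ` and `w` with `μ(0) = 1`, `μ'(0) = 0`, `w(0) = e₁`,
`M(ξ) w(ξ) = μ(ξ) w(ξ)`, `μ(ξ)` a simple root of the characteristic polynomial,
and all other eigenvalues bounded by `C |ξ|`. -/
theorem perturbation_lemma (N : ℕ) (hN : 1 ≤ N) (R : ℝ) (hR : 0 < R)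
    (M : ℂ → Matrix (Fin N) (Fin N) ℂ)
    (hanal : ∀ i j : Fin N, AnalyticOnNhd ℂ (fun ξ => M ξ i j) (Metric.ball 0 R))
    (h11 : ∀ ξ ∈ Metric.ball (0 : ℂ) R, M ξ ⟨0, hN⟩ ⟨0, hN⟩ = 1)
    (hbound : ∀ i j : Fin N, (i, j) ≠ ((⟨0, hN⟩ : Fin N), (⟨0, hN⟩ : Fin N)) →
      ∃ c : ℝ, 0 ≤ c ∧ ∀ ξ ∈ Metric.ball (0 : ℂ) R, ‖M ξ i j‖ ≤ c * ‖ξ‖) :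
    ∃ R' C : ℝ, 0 < R' ∧ R' ≤ R ∧ 0 ≤ C ∧
      ∃ (μ : ℂ → ℂ) (w : ℂ → Fin N → ℂ),
        AnalyticOnNhd ℂ μ (Metric.ball 0 R') ∧
        (∀ i : Fin N, AnalyticOnNhd ℂ (fun ξ => w ξ i) (Metric.ball 0 R')) ∧
        μ 0 = 1 ∧
        deriv μ 0 = 0 ∧
        w 0 = Pi.single (⟨0, hN⟩ : Fin N) 1 ∧
        (∀ ξ ∈ Metric.ball (0 : ℂ) R', (M ξ).mulVec (w ξ) = μ ξ • w ξ) ∧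
        (∀ ξ ∈ Metric.ball (0 : ℂ) R',
          ((M ξ).charpoly).rootMultiplicity (μ ξ) = 1) ∧
        (∀ ξ ∈ Metric.ball (0 : ℂ) R', ∀ lam : ℂ,
          ((M ξ).charpoly).IsRoot lam → lam ≠ μ ξ → ‖lam‖ ≤ C * ‖ξ‖) := by
  set i0 : Fin N := ⟨0, hN⟩
  set n := Fintype.card (Fin N)
  obtain ⟨K, hK0, hA⟩ := exists_forall_nearSingle_mul_norm h11
    fun i j hij => (hbound i j hij).imp fun _ => And.right
  obtain ⟨r, hr, hKr⟩ := exists_pos_mul_lt one_pos (12 * (n + 1) * (n * K))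
  have hball : ball (0 : ℂ) (min R r) ⊆ ball 0 R := ball_subset_ball (min_le_left _ _)
  have h0 : (0 : ℂ) ∈ ball (0 : ℂ) (min R r) := mem_ball_self (lt_min hR hr)
  have hε : ∀ ξ ∈ ball (0 : ℂ) (min R r),
      12 * (n * (K * ‖ξ‖)) ≤ 1 ∧ (n + 1) * (n * (K * ‖ξ‖)) < 1 := by
    intro ξ hξ
    have hξr : ‖ξ‖ ≤ r := (mem_ball_zero_iff.1 hξ).le.trans (min_le_right _ _)
    have h : 12 * (n + 1) * (n * K) * ‖ξ‖ < 1 := hKr.trans_le' (by gcongr)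
    constructor <;> nlinarith [mul_nonneg (Nat.cast_nonneg n) (mul_nonneg hK0 (norm_nonneg ξ))]
  replace hA : ∀ ξ ∈ ball (0 : ℂ) (min R r), NearSingle i0 (K * ‖ξ‖) (M ξ) :=
    fun ξ hξ => hA ξ (hball hξ)
  have hMd : ∀ i j, DifferentiableOn ℂ (fun ξ => M ξ i j) (ball 0 (min R r)) :=
    fun i j => (hanal i j).differentiableOn.mono hball
  refine ⟨min R r, n * K, lt_min hR hr, min_le_left _ _, by positivity, _, _,
    (differentiableOn_dominantEigenvalue isOpen_ball hMd hA fun ξ hξ => (hε ξ hξ).1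
      ).analyticOnNhd isOpen_ball,
    fun i => (differentiableOn_pi.1 (differentiableOn_dominantEigenvector isOpen_ball hMd hA
      fun ξ hξ => (hε ξ hξ).1) i).analyticOnNhd isOpen_ball, ?_, ?_, ?_,
    fun ξ hξ => (hA ξ hξ).mulVec_dominantEigenvector (hε ξ hξ).1,
    fun ξ hξ => (hA ξ hξ).rootMultiplicity_charpoly_dominantEigenvalue (hε ξ hξ).1 (hε ξ hξ).2,
    fun ξ hξ lam hlam hne => ?_⟩
  · simpa [sub_eq_zero] using
      (hA 0 h0).norm_dominantEigenvalue_sub_one_le_sq (h11 0 (hball h0)) (hε 0 h0).1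
  · refine (hasDerivAt_dominantEigenvalue_zero (K := K) ?_).deriv
    filter_upwards [isOpen_ball.mem_nhds h0] with ξ hξ using ⟨h11 ξ (hball hξ), hA ξ hξ⟩
  · simpa [sub_eq_zero] using (hA 0 h0).norm_dominantEigenvector_sub_single_le (hε 0 h0).1
  · rw [mul_assoc]
    exact (hA ξ hξ).norm_le_of_isRoot_charpoly_of_ne (hε ξ hξ).1 (hε ξ hξ).2 hlam hne
end

section
/- Let R be a commutative ring and q, v, v' ∈ R. For each integer m ≥ 1 let t_F(m) = Σ over all compositions (ℓ₁,…,ℓ_k) of m into positive integer parts of ∏_{j=1}^{k} v^{ℓ_j−1}·(q + ℓ_j·v') ∈ R. Then, in the formal power series ring R[[z]], (1 − (q+2v+v')·z + v·(q+v)·z²) · Σ_{m≥1} t_F(m)·z^m = (q+v')·z − q·v·z². -/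
/-! Splitting off the first block of a composition gives the renewal equation `B = 1 + z G B`
for `B(z) = ∑_{m ≥ 0} t_F(m) z^m`, where `z G(z) = ∑_{ℓ ≥ 1} v^(ℓ-1) (q + ℓ v') z^ℓ` is the
one-polymer series. As `G = q / (1 - v z) + v' / (1 - v z)²`, we have
`(1 - v z)² G = q + v' - q v z`, so the quadratic on the left is `(1 - v z)² (1 - z G)`.
Multiplying it by `B - 1 = z G B` and using `(1 - z G) B = 1` leaves `(1 - v z)² z G`. -/

/-- The partition function of the one-dimensional `m`-site polymer gas in which
each site is covered by exactly one polymer and a polymer of length `ℓ` has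
fugacity `v^(ℓ-1) (q + ℓ v')`: the sum over all compositions of `m` into
positive parts of the product of the fugacities of the parts.  This is the
large-`q` dominant diagonal entry of the square-lattice transfer matrix of
width `m` with free boundary conditions. -/
noncomputable def tF {R : Type*} [CommRing R] (q v v' : R) (m : ℕ) : R :=
  ∑ c : Composition m, (c.blocks.map (fun (ℓ : ℕ) => v ^ (ℓ - 1) * (q + (ℓ : R) * v'))).prod

open Finset PowerSeries

namespace Composition

variable {n : ℕ}

lemma blocks_ne_nil_of_succ (c : Composition (n + 1)) : c.blocks ≠ [] :=
  c.blocks_eq_nil.not.mpr n.succ_ne_zero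

def consEquiv (n : ℕ) : (Σ k : Fin (n + 1), Composition (n - k)) ≃ Composition (n + 1) where
  toFun x :=
    { blocks := (x.1 + 1 : ℕ) :: x.2.blocks
      blocks_pos := by
        rintro i (_ | ⟨_, hi⟩)
        exacts [Nat.succ_pos _, x.2.blocks_pos hi]
      blocks_sum := by have := x.2.blocks_sum; have := x.1.isLt; simp only [List.sum_cons]; omega }
  invFun c :=
    have hsum : c.blocks.head c.blocks_ne_nil_of_succ + c.blocks.tail.sum = n + 1 := by
      rw [← List.sum_cons, List.cons_head_tail, c.blocks_sum]
    have hpos : 0 < c.blocks.head c.blocks_ne_nil_of_succ := c.blocks_pos (List.head_mem _)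
    ⟨⟨c.blocks.head c.blocks_ne_nil_of_succ - 1, by omega⟩,
      { blocks := c.blocks.tail
        blocks_pos := fun hi => c.blocks_pos (List.mem_of_mem_tail hi)
        blocks_sum := by simp only; omega }⟩
  left_inv _ := rfl
  right_inv c := by
    ext1
    have hpos : 0 < c.blocks.head c.blocks_ne_nil_of_succ := c.blocks_pos (List.head_mem _)
    simp only [Nat.sub_add_cancel hpos, List.cons_head_tail]

@[simp]
lemma consEquiv_apply_blocks (x : Σ k : Fin (n + 1), Composition (n - k)) :
    (consEquiv n x).blocks = (x.1 + 1 : ℕ) :: x.2.blocks :=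
  rfl

variable {R : Type*} [CommSemiring R]

theorem sum_prod_map_blocks_zero (f : ℕ → R) :
    ∑ c : Composition 0, (c.blocks.map f).prod = 1 := by
  have hnil (c : Composition 0) : c.blocks = [] := c.blocks_eq_nil.mpr rfl
  simp [hnil, composition_card]

theorem sum_prod_map_blocks_succ (f : ℕ → R) (n : ℕ) :
    ∑ c : Composition (n + 1), (c.blocks.map f).prod
      = ∑ k ∈ range (n + 1), f (k + 1) * ∑ c : Composition (n - k), (c.blocks.map f).prod := by
  rw [← (consEquiv n).sum_comp, Fintype.sum_sigma, ← Fin.sum_univ_eq_sum_range]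
  simp [mul_sum]

end Composition

namespace PowerSeries

variable {R : Type*}

noncomputable def compositionSeries [CommSemiring R] (f : ℕ → R) : R⟦X⟧ :=
  mk fun n => ∑ c : Composition n, (c.blocks.map f).prod

theorem compositionSeries_eq_one_add [CommSemiring R] (f : ℕ → R) :
    compositionSeries f = 1 + X * mk (fun k => f (k + 1)) * compositionSeries f := by
  ext (_ | n)
  · simp [compositionSeries, Composition.sum_prod_map_blocks_zero]
  · rw [map_add, mul_assoc, coeff_succ_X_mul, coeff_mul, Nat.sum_antidiagonal_eq_sum_range_succ
      (fun i j => coeff i (mk fun k => f (k + 1)) * coeff j (compositionSeries f))]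
    simp [compositionSeries, Composition.sum_prod_map_blocks_succ]

theorem mk_pow_mul_affine_mul_one_sub_C_mul_X_sq [CommRing R] (r a b : R) :
    mk (fun k => r ^ k * (a + (k + 1 : R) * b)) * (1 - C r * X) ^ 2
      = C (a + b) - C (a * r) * X := by
  have geom : mk (fun k => r ^ k) * (1 - C r * X) = 1 := by
    simpa [rescale_mk, rescale_X] using congrArg (rescale r) (mk_one_mul_one_sub_eq_one R)
  have geom_sq : mk (fun k => r ^ k * (k + 1 : R)) * (1 - C r * X) ^ 2 = 1 := by
    simpa [rescale_mk, rescale_X, add_comm] using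
      congrArg (rescale r) (mk_add_choose_mul_one_sub_pow_eq_one R 1)
  have split : mk (fun k => r ^ k * (a + (k + 1 : R) * b))
      = C a * mk (fun k => r ^ k) + C b * mk (fun k => r ^ k * (k + 1 : R)) := by
    ext k
    simp only [coeff_mk, map_add, coeff_C_mul]
    ring
  rw [split, map_add, map_mul]
  linear_combination (C a * (1 - C r * X)) * geom + C b * geom_sq

end PowerSeries

/-- The generating function `Φ_F(z) = ∑_{m ≥ 1} t_F(m) z^m` satisfies
`(1 - (q+2v+v') z + v (q+v) z²) Φ_F(z) = (q+v') z - q v z²` in `R⟦z⟧`. -/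
theorem tF_generating_function {R : Type*} [CommRing R] (q v v' : R) :
    (1 - PowerSeries.C (q + 2 * v + v') * PowerSeries.X
        + PowerSeries.C (v * (q + v)) * PowerSeries.X ^ 2)
      * PowerSeries.mk (fun m => if m = 0 then 0 else tF q v v' m)
    = PowerSeries.C (q + v') * PowerSeries.X
        - PowerSeries.C (q * v) * PowerSeries.X ^ 2 := by
  set w : ℕ → R := fun ℓ => v ^ (ℓ - 1) * (q + (ℓ : R) * v')
  set G : R⟦X⟧ := mk fun k => w (k + 1)
  have renewal : (1 - X * G) * compositionSeries w = 1 := by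
    linear_combination compositionSeries_eq_one_add w
  have polymer_series : G * (1 - C v * X) ^ 2 = C (q + v') - C (q * v) * X := by
    simpa [G, w] using mk_pow_mul_affine_mul_one_sub_C_mul_X_sq v q v'
  have tF_series : mk (fun m => if m = 0 then 0 else tF q v v' m) = compositionSeries w - 1 := by
    ext (_ | m)
    · simp [compositionSeries, Composition.sum_prod_map_blocks_zero]
    · simp [compositionSeries, tF, w]
  rw [tF_series]
  simp only [map_add, map_mul, map_ofNat] at polymer_series ⊢
  linear_combination (1 - C v * X) ^ 2 * renewal + X * compositionSeries w * polymer_series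
end

section
/- For every integer m ≥ 1, t_F(m) = Σ_{j≥0, 2j≤m−1} C(m−1−j, j)·(q−3)^{m−1−2j}·(q−1)^{j+1} + q · Σ_{j≥0, 2j≤m−2} C(m−2−j, j)·(q−3)^{m−2−2j}·(q−1)^{j}, as an identity in the polynomial ring ℚ[q], where C denotes the ordinary binomial coefficient and the second sum is empty when m = 1. In particular, t_F(m) is a monic polynomial in q of degree m. -/
open Polynomial

noncomputable def tFq (m : ℕ) : Polynomial ℚ :=
  ∑ c : Composition m,
    (c.blocks.map (fun (ℓ : ℕ) =>
      (-1 : Polynomial ℚ) ^ (ℓ - 1) * (Polynomial.X - Polynomial.C (ℓ : ℚ)))).prod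

/-!
Removing the first polymer (of length `i + 1`) from a configuration on `n + 1` sites gives
`t(n+1) = ∑ᵢ w(i+1) t(n-i)` with `w ℓ = (-1)^(ℓ-1) (q - ℓ)`. Since `w(i+2) + w(i+1) = (-1)^i`,
two consecutive instances of this convolution differ by the alternating sum
`A n = ∑ᵢ (-1)^i t(n-i)`, and `A(n+1) + A n = t(n+1)`; eliminating `A` leaves the recurrence
`t(n+3) = (q-3) t(n+2) + (q-1) t(n+1)`. The two sums in the statement are the bivariate
Fibonacci polynomials `F_m(q-3, q-1)` and `F_{m-1}(q-3, q-1)`, which satisfy the same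
recurrence, so comparing initial values gives `t(m) = (q-1) F_m + q F_{m-1}`; monicity and the
degree then follow from `F_{n+1}` being monic of degree `n`.
-/

open Finset

namespace Composition

def firstBlockEquiv (n : ℕ) : Composition (n + 1) ≃ Σ i : Fin (n + 1), Composition (n - i) where
  toFun c :=
    have hne : c.blocks ≠ [] := by simp [blocks_eq_nil]
    have hpos : 0 < c.blocks.head hne := c.blocks_pos (List.head_mem hne)
    have hsum : c.blocks.head hne + c.blocks.tail.sum = n + 1 := by
      rw [← List.sum_cons, List.cons_head_tail, c.blocks_sum]
    ⟨⟨c.blocks.head hne - 1, by omega⟩,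
      ⟨c.blocks.tail, fun h => c.blocks_pos (List.mem_of_mem_tail h), by simp only; omega⟩⟩
  invFun p := (single (p.1 + 1) p.1.succ_pos).append p.2 |>.cast (by omega)
  left_inv c := by
    ext1
    have hne : c.blocks ≠ [] := by simp [blocks_eq_nil]
    have hpos : 0 < c.blocks.head hne := c.blocks_pos (List.head_mem hne)
    change (c.blocks.head hne - 1 + 1) :: c.blocks.tail = c.blocks
    rw [Nat.sub_add_cancel hpos, List.cons_head_tail]
  right_inv _ := rfl

end Composition

section CompositionSum

variable {R : Type*}

def compositionSum [CommSemiring R] (f : ℕ → R) (n : ℕ) : R :=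
  ∑ c : Composition n, (c.blocks.map f).prod

theorem compositionSum_zero [CommSemiring R] (f : ℕ → R) : compositionSum f 0 = 1 := by
  have hnil (c : Composition 0) : c.blocks = [] := c.blocks_eq_nil.2 rfl
  simp [compositionSum, hnil, composition_card]

theorem compositionSum_succ [CommSemiring R] (f : ℕ → R) (n : ℕ) :
    compositionSum f (n + 1) = ∑ i ∈ range (n + 1), f (i + 1) * compositionSum f (n - i) := by
  rw [compositionSum, ← (Composition.firstBlockEquiv n).symm.sum_comp, Fintype.sum_sigma,
    ← Fin.sum_univ_eq_sum_range]
  refine Fintype.sum_congr _ _ fun i => ?_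
  rw [compositionSum, mul_sum]
  rfl

def alternatingSum [CommRing R] (u : ℕ → R) (n : ℕ) : R :=
  ∑ i ∈ range (n + 1), (-1) ^ i * u (n - i)

theorem alternatingSum_succ [CommRing R] (u : ℕ → R) (n : ℕ) :
    alternatingSum u (n + 1) = u (n + 1) - alternatingSum u n := by
  have hshift (i : ℕ) : (-1) ^ (i + 1) * u (n + 1 - (i + 1)) = -((-1) ^ i * u (n - i)) := by
    rw [Nat.add_sub_add_right, pow_succ]
    ring
  rw [alternatingSum, sum_range_succ', alternatingSum]
  simp only [hshift, sum_neg_distrib, pow_zero, one_mul, Nat.sub_zero]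
  ring

variable [CommRing R] {f : ℕ → R}

theorem compositionSum_add_two (hf : ∀ i, f (i + 2) = (-1) ^ i - f (i + 1)) (n : ℕ) :
    compositionSum f (n + 2) =
      (f 1 - 1) * compositionSum f (n + 1) + alternatingSum (compositionSum f) n := by
  rw [compositionSum_succ f (n + 1), sum_range_succ']
  simp only [add_assoc, Nat.reduceAdd, hf, Nat.add_sub_add_right, sub_mul, sum_sub_distrib,
    ← compositionSum_succ, alternatingSum, zero_add, Nat.sub_zero]
  ring

theorem compositionSum_add_three (hf : ∀ i, f (i + 2) = (-1) ^ i - f (i + 1)) (n : ℕ) :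
    compositionSum f (n + 3) =
      (f 1 - 2) * compositionSum f (n + 2) + f 1 * compositionSum f (n + 1) := by
  have h := compositionSum_add_two hf n
  rw [compositionSum_add_two hf (n + 1), alternatingSum_succ, h]
  ring

end CompositionSum

section BivariateFib

variable {R : Type*}

def bivariateFib [Semiring R] (a b : R) : ℕ → R
  | 0 => 0
  | 1 => 1
  | n + 2 => a * bivariateFib a b (n + 1) + b * bivariateFib a b n

variable [CommSemiring R] (a b : R)

def bivariateFibTerm (n j : ℕ) : R := ((n - j).choose j : R) * a ^ (n - 2 * j) * b ^ j

theorem bivariateFibTerm_eq_zero {n j : ℕ} (h : n < 2 * j) : bivariateFibTerm a b n j = 0 := by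
  rw [bivariateFibTerm, Nat.choose_eq_zero_of_lt (by omega), Nat.cast_zero, zero_mul, zero_mul]

theorem bivariateFibTerm_zero_right (n : ℕ) :
    bivariateFibTerm a b (n + 1) 0 = a * bivariateFibTerm a b n 0 := by
  simp [bivariateFibTerm, pow_succ, mul_comm]

theorem bivariateFibTerm_add_two (n j : ℕ) :
    bivariateFibTerm a b (n + 2) (j + 1) =
      a * bivariateFibTerm a b (n + 1) (j + 1) + b * bivariateFibTerm a b n j := by
  simp only [bivariateFibTerm]
  rw [show n + 2 - (j + 1) = n + 1 - j by omega, show n + 2 - 2 * (j + 1) = n - 2 * j by omega,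
    show n + 1 - (j + 1) = n - j by omega, show n + 1 - 2 * (j + 1) = n - 1 - 2 * j by omega]
  rcases lt_trichotomy (2 * j) n with h | h | h
  · rw [show n + 1 - j = n - j + 1 by omega, Nat.choose_succ_succ,
      show n - 2 * j = n - 1 - 2 * j + 1 by omega]
    push_cast
    ring
  · rw [show n + 1 - j = j + 1 by omega, show n - j = j by omega, show n - 2 * j = 0 by omega,
      Nat.choose_self, Nat.choose_succ_self]
    simp [pow_succ, mul_comm]
  · rw [Nat.choose_eq_zero_of_lt (by omega : n + 1 - j < j + 1),
      Nat.choose_eq_zero_of_lt (by omega : n - j < j + 1),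
      Nat.choose_eq_zero_of_lt (by omega : n - j < j)]
    simp

theorem bivariateFib_succ_eq_sum : ∀ {n N : ℕ}, n < N →
    bivariateFib a b (n + 1) = ∑ j ∈ range N, bivariateFibTerm a b n j
  | 0, N + 1, _ => by
    rw [sum_range_succ', sum_eq_zero fun j _ => bivariateFibTerm_eq_zero a b (by omega)]
    simp [bivariateFib, bivariateFibTerm]
  | 1, N + 2, _ => by
    rw [sum_range_succ', sum_range_succ', sum_eq_zero fun j _ => bivariateFibTerm_eq_zero a b (by omega)]
    simp [bivariateFib, bivariateFibTerm]
  | n + 2, N + 1, h => by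
    rw [bivariateFib, bivariateFib_succ_eq_sum (n := n + 1) (N := N + 1) (by omega),
      bivariateFib_succ_eq_sum (n := n) (N := N) (by omega), sum_range_succ', sum_range_succ',
      bivariateFibTerm_zero_right a b (n + 1)]
    simp only [bivariateFibTerm_add_two, sum_add_distrib, mul_add, mul_sum]
    ring

end BivariateFib

theorem Polynomial.Monic.mul_add_mul {R : Type*} [Semiring R] {a b p q : R[X]} {d : ℕ}
    (ha : a.Monic) (ha1 : a.natDegree = 1) (hb : b.natDegree ≤ 1) (hp : p.Monic)
    (hpd : p.natDegree = d + 1) (hqd : q.natDegree ≤ d) :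
    (a * p + b * q).Monic ∧ (a * p + b * q).natDegree = d + 2 := by
  have hlead : (a * p).natDegree = d + 2 := by rw [ha.natDegree_mul hp, ha1, hpd, add_comm]
  have hlow : (b * q).natDegree < (a * p).natDegree := by
    rw [hlead]
    exact natDegree_mul_le.trans_lt (by omega)
  exact ⟨(ha.mul hp).add_of_left (degree_lt_degree hlow),
    (natDegree_add_eq_left_of_natDegree_lt hlow).trans hlead⟩

theorem bivariateFib_monic {R : Type*} [Semiring R] {a b : R[X]} (ha : a.Monic)
    (ha1 : a.natDegree = 1) (hb : b.natDegree ≤ 1) :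
    ∀ n, (bivariateFib a b (n + 1)).Monic ∧ (bivariateFib a b (n + 1)).natDegree = n
  | 0 => by simp [bivariateFib]
  | 1 => by
    simp only [bivariateFib, mul_one, mul_zero, add_zero]
    exact ⟨ha, ha1⟩
  | n + 2 => by
    obtain ⟨hp, hpd⟩ := bivariateFib_monic ha ha1 hb (n + 1)
    exact ha.mul_add_mul ha1 hb hp hpd (bivariateFib_monic ha ha1 hb n).2.le

section PolymerWeight

variable {R : Type*} [CommRing R]

def polymerWeight (x : R) (ℓ : ℕ) : R := (-1) ^ (ℓ - 1) * (x - ℓ)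

theorem polymerWeight_add_two (x : R) (i : ℕ) :
    polymerWeight x (i + 2) = (-1) ^ i - polymerWeight x (i + 1) := by
  simp only [polymerWeight, Nat.add_sub_cancel]
  push_cast
  ring

theorem compositionSum_polymerWeight (x : R) : ∀ n,
    compositionSum (polymerWeight x) (n + 1) =
      (x - 1) * bivariateFib (x - 3) (x - 1) (n + 1) + x * bivariateFib (x - 3) (x - 1) n
  | 0 => by simp [compositionSum_succ, compositionSum_zero, polymerWeight, bivariateFib]
  | 1 => by
    rw [compositionSum_add_two (polymerWeight_add_two x), compositionSum_polymerWeight x 0,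
      alternatingSum, sum_range_one, Nat.sub_zero, compositionSum_zero]
    simp only [polymerWeight, bivariateFib]
    ring
  | n + 2 => by
    rw [compositionSum_add_three (polymerWeight_add_two x), compositionSum_polymerWeight x (n + 1),
      compositionSum_polymerWeight x n]
    simp only [polymerWeight, bivariateFib]
    ring

end PolymerWeight

theorem tFq_eq_compositionSum (m : ℕ) : tFq m = compositionSum (polymerWeight X) m := by
  simp only [tFq, compositionSum, map_natCast]
  rfl

theorem tFq_eq_bivariateFib (n : ℕ) :
    tFq (n + 1) = (X - C 1) * bivariateFib (X - C 3) (X - C 1) (n + 1) +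
      X * bivariateFib (X - C 3) (X - C 1) n := by
  rw [tFq_eq_compositionSum, compositionSum_polymerWeight]
  simp only [map_ofNat, map_one]

theorem tFq_monic_natDegree (n : ℕ) : (tFq (n + 1)).Monic ∧ (tFq (n + 1)).natDegree = n + 1 := by
  rw [tFq_eq_bivariateFib]
  rcases n with _ | n
  · simp only [bivariateFib, mul_one, mul_zero, add_zero]
    exact ⟨monic_X_sub_C 1, natDegree_X_sub_C 1⟩
  · have hfib := bivariateFib_monic (monic_X_sub_C (3 : ℚ)) (natDegree_X_sub_C 3)
      (natDegree_X_sub_C_le 1)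
    exact (monic_X_sub_C 1).mul_add_mul (natDegree_X_sub_C 1) natDegree_X_le (hfib (n + 1)).1
      (hfib (n + 1)).2 (hfib n).2.le

/-- Explicit formula: for `m ≥ 1`,
`t_F(m) = ∑_{2j ≤ m-1} C(m-1-j, j) (q-3)^(m-1-2j) (q-1)^(j+1)
          + q ∑_{2j ≤ m-2} C(m-2-j, j) (q-3)^(m-2-2j) (q-1)^j` in `ℚ[q]`;
in particular `t_F(m)` is monic of degree `m`. -/
theorem tFq_explicit (m : ℕ) (hm : 1 ≤ m) :
    (tFq m =
      (∑ j ∈ Finset.range m, if 2 * j + 1 ≤ m then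
          Polynomial.C (((m - 1 - j).choose j : ℚ))
            * (Polynomial.X - Polynomial.C 3) ^ (m - 1 - 2 * j)
            * (Polynomial.X - Polynomial.C 1) ^ (j + 1)
        else 0)
      + Polynomial.X *
        ∑ j ∈ Finset.range m, if 2 * j + 2 ≤ m then
          Polynomial.C (((m - 2 - j).choose j : ℚ))
            * (Polynomial.X - Polynomial.C 3) ^ (m - 2 - 2 * j)
            * (Polynomial.X - Polynomial.C 1) ^ j
        else 0)
    ∧ (tFq m).Monic ∧ (tFq m).natDegree = m := by
  obtain ⟨n, rfl⟩ : ∃ n, m = n + 1 := ⟨m - 1, by omega⟩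
  refine ⟨?_, tFq_monic_natDegree n⟩
  rw [tFq_eq_bivariateFib]
  simp only [map_natCast]
  rcases n with _ | n
  · simp [bivariateFib]
  congr 1
  · rw [bivariateFib_succ_eq_sum _ _ (n := n + 1) (N := n + 2) (by omega), mul_sum]
    refine sum_congr rfl fun j _ => ?_
    rw [ite_eq_left_iff.2 fun h => by rw [Nat.choose_eq_zero_of_lt (by omega)]; simp,
      bivariateFibTerm, show n + 1 + 1 - 1 - j = n + 1 - j by omega,
      show n + 1 + 1 - 1 - 2 * j = n + 1 - 2 * j by omega, pow_succ]
    ring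
  · rw [bivariateFib_succ_eq_sum _ _ (n := n) (N := n + 2) (by omega)]
    congr 1
    refine sum_congr rfl fun j _ => ?_
    rw [ite_eq_left_iff.2 fun h => by rw [Nat.choose_eq_zero_of_lt (by omega)]; simp,
      bivariateFibTerm, show n + 1 + 1 - 2 - j = n - j by omega,
      show n + 1 + 1 - 2 - 2 * j = n - 2 * j by omega]
end

section
/- For every integer m ≥ 1, t_F(m) = Σ_{k=0}^{m} (−1)^k · a^F_k(m) · q^{m−k}, as an identity in ℚ[q], where a^F_k(m) denotes the value of the function a^F_k at x = m. -/
/-- Falling factorial `x(x-1)⋯(x-n+1)` in `ℚ`. -/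
def ffall (x : ℚ) (n : ℕ) : ℚ := ∏ i ∈ Finset.range n, (x - (i : ℚ))

/-- Generalized binomial coefficient: `C(x, n) = x(x-1)⋯(x-n+1)/n!` for `n ≥ 0`,
and `C(x, n) = 0` for `n < 0`. -/
def gchoose (x : ℚ) (n : ℤ) : ℚ :=
  if 0 ≤ n then ffall x n.toNat / ((n.toNat).factorial : ℚ) else 0

/-- The function `a^F_k(x)` defined by
`a^F_k(x) = ∑_{p=0}^{k} (-1)^p C(x-1-p, p) ∑_{r=0}^{k-p} 3^r C(x-1-2p, r) C(p+1, k-p-r)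
          + ∑_{p=1}^{k} (-1)^p C(x-1-p, p-1) ∑_{r=0}^{k-p} 3^r C(x-2p, r) C(p-1, k-p-r)`,
with `C` the generalized binomial coefficient. -/
def aF (k : ℕ) (x : ℚ) : ℚ :=
  (∑ p ∈ Finset.range (k + 1), (-1 : ℚ) ^ p * gchoose (x - 1 - p) p *
    ∑ r ∈ Finset.range (k - p + 1),
      3 ^ r * gchoose (x - 1 - 2 * p) r * gchoose ((p : ℚ) + 1) ((k : ℤ) - p - r))
  + ∑ p ∈ Finset.Icc 1 k, (-1 : ℚ) ^ p * gchoose (x - 1 - p) ((p : ℤ) - 1) *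
    ∑ r ∈ Finset.range (k - p + 1),
      3 ^ r * gchoose (x - 2 * p) r * gchoose ((p : ℚ) - 1) ((k : ℤ) - p - r)

/-!
Both sides satisfy `t (m + 3) = (q - 3) t (m + 2) + (q - 1) t (m + 1)` and agree at `m = 1, 2`.

For `t_F`, splitting off the first polymer gives the convolution
`t (n + 1) = ∑ ℓ, (-1) ^ ℓ (q - ℓ - 1) t (n - ℓ)`; its kernel has generating function
`((q - 1) + q w) / (1 + w) ^ 2`, and clearing the denominator yields the three-term recurrence.

For the right-hand side, `a^F_k(x) = U_k(x) + U_{k-1}(x) - U_{k-1}(x - 1)` (`aFInt`), where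
`U_k(x)` (`uCoeff`) is the coefficient of `z ^ k` in
`∑ p, C(x-1-p, p) (-z(1+z)) ^ p (1+3z) ^ (x-1-2p)`.
Pascal's rule gives `U(x) = (1 + 3z) U(x - 1) - z (1 + z) U(x - 2)` for every rational `x`, which is
the coefficientwise form of the same recurrence. Comparing constant coefficients also involves
`a^F_{m+1}(m)`, which lies outside the sum; it vanishes for `m ≥ 1` because `U_m(m) = 1` and
`U_{m+1}(m) = -(m + 1)`.
-/

open Finset Polynomial

def compositionCons (n : ℕ) (x : Σ ℓ : Fin (n + 1), Composition (n - ℓ)) :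
    Composition (n + 1) where
  blocks := (x.1 + 1) :: x.2.blocks
  blocks_pos {i} hi := by
    rcases List.mem_cons.mp hi with rfl | h
    · omega
    · exact x.2.blocks_pos h
  blocks_sum := by
    rw [List.sum_cons, x.2.blocks_sum]
    omega

theorem compositionCons_bijective (n : ℕ) : Function.Bijective (compositionCons n) := by
  constructor
  · rintro ⟨ℓ₁, c₁⟩ ⟨ℓ₂, c₂⟩ h
    obtain ⟨hℓ, hc⟩ := List.cons.inj (congrArg Composition.blocks h)
    simp only at hℓ
    obtain rfl : ℓ₁ = ℓ₂ := Fin.ext (by omega)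
    obtain rfl : c₁ = c₂ := Composition.ext hc
    rfl
  · intro c
    obtain ⟨_ | ⟨a, t⟩, hpos, hsum⟩ := c
    · simp at hsum
    · have ha : 0 < a := hpos List.mem_cons_self
      rw [List.sum_cons] at hsum
      refine
        ⟨⟨⟨a - 1, by omega⟩, ⟨t, fun hi => hpos (List.mem_cons_of_mem a hi), ?_⟩⟩, ?_⟩
      · simp only
        omega
      · apply Composition.ext
        simp only [compositionCons]
        congr 1
        omega

def polymerPartition {R : Type*} [CommSemiring R] (w : ℕ → R) (m : ℕ) : R :=
  ∑ c : Composition m, (c.blocks.map w).prod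

section polymerPartition

variable {R : Type*} [CommSemiring R] (w : ℕ → R)

theorem polymerPartition_zero : polymerPartition w 0 = 1 := by
  have : Subsingleton (Composition 0) :=
    ⟨fun a b => Composition.ext (by rw [a.blocks_eq_nil.2 rfl, b.blocks_eq_nil.2 rfl])⟩
  rw [polymerPartition, Fintype.sum_subsingleton _ (Composition.ones 0)]
  simp [Composition.ones]

theorem polymerPartition_succ (n : ℕ) :
    polymerPartition w (n + 1) =
      ∑ ℓ ∈ range (n + 1), w (ℓ + 1) * polymerPartition w (n - ℓ) := by
  rw [polymerPartition, ← Fintype.sum_bijective _ (compositionCons_bijective n) _ _ fun _ => rfl,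
    ← univ_sigma_univ, sum_sigma, ← Fin.sum_univ_eq_sum_range]
  refine sum_congr rfl fun ℓ _ => ?_
  simp [compositionCons, polymerPartition, mul_sum]

end polymerPartition

theorem add_three_eq_of_convolution {R : Type*} [CommRing R] (q : R) (t : ℕ → R)
    (ht : ∀ n, t (n + 1) = ∑ ℓ ∈ range (n + 1), (-1) ^ ℓ * (q - (ℓ + 1)) * t (n - ℓ))
    (n : ℕ) :
    t (n + 3) = (q - 3) * t (n + 2) + (q - 1) * t (n + 1) := by
  have h₁ (n : ℕ) :
      t (n + 2) - (q - 2) * t (n + 1) = ∑ ℓ ∈ range (n + 1), (-1) ^ ℓ * t (n - ℓ) := calc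
    _ = ∑ ℓ ∈ range (n + 1), (-1) ^ (ℓ + 1) * (q - (ℓ + 2)) * t (n - ℓ)
        + t (n + 1) := by
      rw [ht (n + 1), sum_range_succ']
      simp only [Nat.add_sub_add_right, Nat.sub_zero, Nat.cast_add, Nat.cast_one, Nat.cast_zero]
      ring_nf
    _ = _ := by
      rw [ht n, ← sum_add_distrib]
      exact sum_congr rfl fun ℓ _ => by ring
  have h₂ : ∑ ℓ ∈ range (n + 2), (-1) ^ ℓ * t (n + 1 - ℓ)
      = t (n + 1) - ∑ ℓ ∈ range (n + 1), (-1) ^ ℓ * t (n - ℓ) := by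
    rw [sum_range_succ', sub_eq_neg_add, ← sum_neg_distrib]
    simp [pow_succ]
  linear_combination h₁ (n + 1) + h₁ n + h₂

theorem tFq_eq_polymerPartition (m : ℕ) :
    tFq m = polymerPartition (fun ℓ => (-1) ^ (ℓ - 1) * (X - C (ℓ : ℚ))) m := rfl

theorem tFq_one : tFq 1 = X - 1 := by
  simp [tFq_eq_polymerPartition, polymerPartition_succ, polymerPartition_zero]

theorem tFq_two : tFq 2 = X ^ 2 - 3 * X + 3 := by
  simp [tFq_eq_polymerPartition, polymerPartition_succ, polymerPartition_zero, sum_range_succ]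
  ring

theorem tFq_succ (n : ℕ) :
    tFq (n + 1) =
      ∑ ℓ ∈ range (n + 1), (-1) ^ ℓ * (X - ((ℓ : ℚ[X]) + 1)) * tFq (n - ℓ) := by
  simp [tFq_eq_polymerPartition, polymerPartition_succ]

theorem tFq_rec (n : ℕ) :
    tFq (n + 3) = (X - C 3) * tFq (n + 2) + (X - C 1) * tFq (n + 1) := by
  simpa [C_ofNat] using add_three_eq_of_convolution X tFq tFq_succ n

theorem gchoose_eq_ringChoose (x : ℚ) (n : ℕ) : gchoose x n = Ring.choose x n := by
  rw [Ring.choose_eq_smul, smul_eq_mul, ← aeval_eq_smeval, aeval_def, ← eval_map,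
    descPochhammer_map, descPochhammer_eval_eq_prod_range]
  simp [gchoose, ffall, div_eq_inv_mul]

theorem gchoose_of_neg (x : ℚ) {n : ℤ} (h : n < 0) : gchoose x n = 0 := by
  simp [gchoose, h.not_ge]

theorem gchoose_zero_right (x : ℚ) : gchoose x 0 = 1 := by
  simpa using gchoose_eq_ringChoose x 0

theorem gchoose_one_right (x : ℚ) : gchoose x 1 = x := by
  simpa using gchoose_eq_ringChoose x 1

theorem gchoose_pascal (x : ℚ) (n : ℤ) :
    gchoose x n = gchoose (x - 1) n + gchoose (x - 1) (n - 1) := by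
  rcases lt_or_ge n 0 with hn | hn
  · simp [gchoose_of_neg _ hn, gchoose_of_neg _ (show n - 1 < 0 by omega)]
  lift n to ℕ using hn
  cases n with
  | zero => simp [gchoose_zero_right, gchoose_of_neg]
  | succ n =>
    have h := Ring.choose_succ_succ (x - 1) n
    rw [sub_add_cancel] at h
    rw [show ((n + 1 : ℕ) : ℤ) - 1 = n by push_cast; ring]
    simp only [gchoose_eq_ringChoose]
    rw [h, add_comm]

theorem gchoose_natCast_of_lt {a : ℕ} {n : ℤ} (h : a < n) : gchoose a n = 0 := by
  lift n to ℕ using by omega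
  rw [gchoose_eq_ringChoose, Ring.choose_natCast, Nat.choose_eq_zero_of_lt (by omega),
    Nat.cast_zero]

theorem gchoose_neg_natCast_sub_one (a n : ℕ) :
    gchoose (-a - 1) n = (-1) ^ n * (a + n).choose n := by
  rw [gchoose_eq_ringChoose, sub_eq_add_neg, ← neg_add, Ring.choose_neg, Units.smul_def,
    zsmul_eq_mul, Int.cast_negOnePow_natCast,
    show (a : ℚ) + 1 + n - 1 = (a + n : ℕ) by push_cast; ring,
    Ring.choose_natCast]

theorem gchoose_neg_one (n : ℕ) : gchoose (-1) n = (-1) ^ n := by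
  simpa using gchoose_neg_natCast_sub_one 0 n

theorem gchoose_neg_two (n : ℕ) : gchoose (-2) n = (-1) ^ n * (n + 1) := by
  have h := gchoose_neg_natCast_sub_one 1 n
  norm_num [add_comm 1 n] at h
  exact h

/-- The contribution to `U_k(x)` of the `p`-th term, with `(3z) ^ r` taken from `(1+3z) ^ (x-1-2p)`
and `z ^ (k-p-r)` from `(1+z) ^ p`. -/
def uTerm (k : ℤ) (x : ℚ) (p r : ℕ) : ℚ :=
  (-1) ^ p * gchoose (x - 1 - p) p * (3 ^ r * gchoose (x - 1 - 2 * p) r * gchoose p (k - p - r))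

def uCoeff (k : ℤ) (x : ℚ) : ℚ :=
  ∑ p ∈ range (k.toNat + 1), ∑ r ∈ range (k.toNat + 1), uTerm k x p r

theorem uTerm_eq_zero {k : ℤ} {p r : ℕ} (h : k < p + r) (x : ℚ) : uTerm k x p r = 0 := by
  simp [uTerm, gchoose_of_neg _ (show k - p - r < 0 by omega)]

theorem uCoeff_of_neg {k : ℤ} (hk : k < 0) (x : ℚ) : uCoeff k x = 0 :=
  sum_eq_zero fun p _ => sum_eq_zero fun r _ => uTerm_eq_zero (by omega) x

theorem uCoeff_eq_sum {k : ℤ} {P R : ℕ} (hP : k < P) (hR : k < R) (x : ℚ) :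
    uCoeff k x = ∑ p ∈ range P, ∑ r ∈ range R, uTerm k x p r := by
  rcases lt_or_ge k 0 with hk | hk
  · rw [uCoeff_of_neg hk]
    exact (sum_eq_zero fun p _ => sum_eq_zero fun r _ => uTerm_eq_zero (by omega) x).symm
  symm
  rw [eventually_constant_sum (N := k.toNat + 1)
    (fun p hp => sum_eq_zero fun r _ => uTerm_eq_zero (by omega) x) (by omega)]
  exact sum_congr rfl fun p _ =>
    eventually_constant_sum (fun r hr => uTerm_eq_zero (by omega) x) (by omega)

theorem uCoeff_zero (x : ℚ) : uCoeff 0 x = 1 := by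
  simp [uCoeff, uTerm, gchoose_zero_right]

theorem uCoeff_rec (k : ℤ) (x : ℚ) :
    uCoeff k x = uCoeff k (x - 1) + 3 * uCoeff (k - 1) (x - 1)
      - uCoeff (k - 1) (x - 2) - uCoeff (k - 2) (x - 2) := by
  obtain ⟨N, hN⟩ : ∃ N : ℕ, k < N := ⟨k.toNat + 1, by omega⟩
  -- Pascal's rule on `C(x-1-p, p)`, then on `C(x-1-2p, r)` in the first half, splits each summand;
  -- `a` is the shift `r ↦ r + 1` of `3 U_{k-1}(x-1)`, and `b` is the shift `p ↦ p + 1` of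
  -- `-U_{k-1}(x-2) - U_{k-2}(x-2)` once Pascal's rule is applied to `C(p+1, ·)`.
  set a : ℕ → ℕ → ℚ := fun p r => (-1) ^ p * gchoose (x - 2 - p) p *
    (3 ^ r * gchoose (x - 2 - 2 * p) (r - 1) * gchoose p (k - p - r))
  set b : ℕ → ℕ → ℚ := fun p r => (-1) ^ p * gchoose (x - 2 - p) (p - 1) *
    (3 ^ r * gchoose (x - 1 - 2 * p) r * gchoose p (k - p - r))
  have split : ∀ p r, uTerm k x p r = uTerm k (x - 1) p r + a p r + b p r := by
    intro p r
    have h := gchoose_pascal (x - 1 - 2 * p) r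
    simp only [uTerm, a, b, gchoose_pascal (x - 1 - p) p]
    linear_combination (norm := ring_nf)
      (-1) ^ p * gchoose (x - 2 - p) p * 3 ^ r * gchoose p (k - p - r) * h
  have ha :
      ∑ p ∈ range (N + 1), ∑ r ∈ range (N + 1), a p r = 3 * uCoeff (k - 1) (x - 1) := by
    rw [uCoeff_eq_sum (P := N + 1) (R := N) (by omega) (by omega), mul_sum]
    refine sum_congr rfl fun p _ => ?_
    rw [sum_range_succ', mul_sum]
    simp only [a, gchoose_of_neg _ (show ((0 : ℕ) : ℤ) - 1 < 0 by omega), mul_zero, zero_mul,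
      add_zero]
    refine sum_congr rfl fun r _ => ?_
    simp only [uTerm]
    push_cast
    ring_nf
  have hb : ∑ p ∈ range (N + 1), ∑ r ∈ range (N + 1), b p r
      = -uCoeff (k - 1) (x - 2) - uCoeff (k - 2) (x - 2) := by
    rw [uCoeff_eq_sum (P := N) (R := N + 1) (by omega) (by omega),
      uCoeff_eq_sum (P := N) (R := N + 1) (by omega) (by omega), ← sum_neg_distrib,
      ← sum_sub_distrib, sum_range_succ']
    simp only [b, gchoose_of_neg _ (show ((0 : ℕ) : ℤ) - 1 < 0 by omega), mul_zero, zero_mul,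
      sum_const_zero, add_zero]
    refine sum_congr rfl fun p _ => ?_
    rw [← sum_neg_distrib, ← sum_sub_distrib]
    refine sum_congr rfl fun r _ => ?_
    simp only [uTerm]
    rw [gchoose_pascal ((p + 1 : ℕ) : ℚ)]
    push_cast
    ring_nf
  rw [uCoeff_eq_sum (P := N + 1) (R := N + 1) (by omega) (by omega) x,
    uCoeff_eq_sum (P := N + 1) (R := N + 1) (by omega) (by omega) (x - 1)]
  simp_rw [split, sum_add_distrib]
  linear_combination ha + hb

def aFInt (k : ℤ) (x : ℚ) : ℚ := uCoeff k x + uCoeff (k - 1) x - uCoeff (k - 1) (x - 1)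

theorem aF_first_sum (k : ℕ) (x : ℚ) :
    ∑ p ∈ range (k + 1), (-1 : ℚ) ^ p * gchoose (x - 1 - p) p *
      ∑ r ∈ range (k - p + 1),
        3 ^ r * gchoose (x - 1 - 2 * p) r * gchoose ((p : ℚ) + 1) ((k : ℤ) - p - r)
      = uCoeff k x + uCoeff (k - 1) x := by
  rw [uCoeff_eq_sum (P := k + 1) (R := k + 1) (by omega) (by omega),
    uCoeff_eq_sum (P := k + 1) (R := k + 1) (by omega) (by omega), ← sum_add_distrib]
  refine sum_congr rfl fun p hp => ?_
  rw [mem_range] at hp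
  rw [mul_sum, ← sum_add_distrib,
    ← eventually_constant_sum (n := k + 1) (fun r hr => ?_) (by omega)]
  · refine sum_congr rfl fun r _ => ?_
    simp only [uTerm]
    rw [gchoose_pascal ((p : ℚ) + 1)]
    ring_nf
  · rw [gchoose_of_neg ((p : ℚ) + 1) (by omega), mul_zero, mul_zero]

theorem aF_second_sum (k : ℕ) (x : ℚ) :
    ∑ p ∈ Icc 1 k, (-1 : ℚ) ^ p * gchoose (x - 1 - p) ((p : ℤ) - 1) *
      ∑ r ∈ range (k - p + 1),
        3 ^ r * gchoose (x - 2 * p) r * gchoose ((p : ℚ) - 1) ((k : ℤ) - p - r)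
      = -uCoeff (k - 1) (x - 1) := by
  rw [uCoeff_eq_sum (P := k) (R := k) (by omega) (by omega), ← sum_neg_distrib,
    ← Ico_add_one_right_eq_Icc, sum_Ico_eq_sum_range, Nat.add_sub_cancel]
  refine sum_congr rfl fun p hp => ?_
  rw [mem_range] at hp
  rw [mul_sum, ← sum_neg_distrib,
    ← eventually_constant_sum (n := k) (fun r hr => ?_) (by omega)]
  · refine sum_congr rfl fun r _ => ?_
    simp only [uTerm]
    push_cast
    ring_nf
  · rw [gchoose_of_neg (((1 + p : ℕ) : ℚ) - 1) (by omega), mul_zero, mul_zero]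

theorem aF_eq_aFInt (k : ℕ) (x : ℚ) : aF k x = aFInt k x := by
  rw [aF, aF_first_sum, aF_second_sum, aFInt]
  ring

theorem uTerm_natCast_eq_zero {m : ℕ} {k : ℤ} (hk : m ≤ k) {p : ℕ} (hp : p < m) (r : ℕ) :
    uTerm k m p r = 0 := by
  unfold uTerm
  by_cases h2p : m ≤ 2 * p
  · obtain ⟨j, rfl⟩ : ∃ j, m = p + 1 + j := ⟨m - (p + 1), by omega⟩
    rw [show ((p + 1 + j : ℕ) : ℚ) - 1 - p = j by push_cast; ring,
      gchoose_natCast_of_lt (by omega), mul_zero, zero_mul]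
  obtain ⟨j, rfl⟩ : ∃ j, m = 2 * p + 1 + j := ⟨m - (2 * p + 1), by omega⟩
  rw [show ((2 * p + 1 + j : ℕ) : ℚ) - 1 - 2 * p = j by push_cast; ring]
  rcases lt_or_ge j r with hr | hr
  · rw [gchoose_natCast_of_lt (by omega)]
    ring
  · rw [gchoose_natCast_of_lt (a := p) (by omega)]
    ring

theorem uCoeff_natCast_self (m : ℕ) : uCoeff m m = 1 := by
  rw [uCoeff_eq_sum (P := m + 1) (R := m + 1) (by omega) (by omega), sum_range_succ,
    sum_eq_zero fun p hp => sum_eq_zero fun r _ =>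
      uTerm_natCast_eq_zero le_rfl (mem_range.mp hp) r,
    zero_add, eventually_constant_sum (N := 1) (fun r hr => uTerm_eq_zero (by omega) _) (by omega),
    sum_range_one]
  simp [uTerm, show (m : ℚ) - 1 - m = -1 by ring, gchoose_neg_one, gchoose_zero_right,
    ← mul_pow]

theorem uCoeff_natCast_succ_self (m : ℕ) : uCoeff (m + 1) m = -(m + 1) := by
  have hm : ∑ r ∈ range (m + 2), uTerm (m + 1) m m r = m - 3 * (m + 1) := by
    rw [eventually_constant_sum (N := 2) (fun r hr => uTerm_eq_zero (by omega) _) (by omega),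
      sum_range_succ, sum_range_one]
    simp [uTerm, show (m : ℚ) - 1 - m = -1 by ring, show (m : ℚ) - 1 - 2 * m = -(m + 1) by ring,
      gchoose_neg_one, gchoose_zero_right, gchoose_one_right, ← mul_pow]
    ring
  have hm1 : ∑ r ∈ range (m + 2), uTerm (m + 1) m (m + 1) r = m + 2 := by
    rw [eventually_constant_sum (N := 1) (fun r hr => uTerm_eq_zero (by omega) _) (by omega),
      sum_range_one]
    have h := gchoose_neg_two (m + 1)
    push_cast at h
    simp [uTerm, show (m : ℚ) - 1 - (m + 1) = -2 by ring, h, gchoose_zero_right, ← mul_assoc,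
      ← mul_pow]
    ring
  rw [uCoeff_eq_sum (P := m + 2) (R := m + 2) (by omega) (by omega), sum_range_succ,
    sum_range_succ, sum_eq_zero fun p hp => sum_eq_zero fun r _ =>
      uTerm_natCast_eq_zero (by omega) (mem_range.mp hp) r, hm, hm1]
  ring

theorem aFInt_rec (k : ℤ) (x : ℚ) :
    aFInt k x = aFInt k (x - 1) + 3 * aFInt (k - 1) (x - 1)
      - aFInt (k - 1) (x - 2) - aFInt (k - 2) (x - 2) := by
  have h₁ := uCoeff_rec k x
  have h₂ := uCoeff_rec (k - 1) x
  have h₃ := uCoeff_rec (k - 1) (x - 1)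
  simp only [aFInt]
  rw [show k - 1 - 1 = k - 2 by ring, show k - 1 - 2 = k - 3 by ring,
    show k - 2 - 1 = k - 3 by ring, show x - 1 - 1 = x - 2 by ring,
    show x - 1 - 2 = x - 3 by ring, show x - 2 - 1 = x - 3 by ring] at *
  linear_combination h₁ + h₂ - h₃

theorem aFInt_of_neg {k : ℤ} (hk : k < 0) (x : ℚ) : aFInt k x = 0 := by
  simp [aFInt, uCoeff_of_neg hk, uCoeff_of_neg (show k - 1 < 0 by omega)]

theorem aFInt_zero (x : ℚ) : aFInt 0 x = 1 := by
  simp [aFInt, uCoeff_zero, uCoeff_of_neg]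

theorem aFInt_natCast_add_two_add_one (n : ℕ) :
    aFInt ((n : ℤ) + 2) ((n : ℚ) + 1) = 0 := by
  have h₁ := uCoeff_natCast_succ_self (n + 1)
  have h₂ := uCoeff_natCast_self (n + 1)
  have h₃ := uCoeff_natCast_succ_self n
  push_cast at h₁ h₂ h₃
  rw [aFInt, show (n : ℤ) + 2 - 1 = n + 1 by ring, show (n : ℚ) + 1 - 1 = n by ring,
    show (n : ℤ) + 2 = n + 1 + 1 by ring, h₁, h₂, h₃]
  ring

theorem aFInt_one_one : aFInt 1 1 = 1 := by
  have h := uCoeff_natCast_self 1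
  push_cast at h
  simp [aFInt, h, uCoeff_zero]

theorem uCoeff_one_two : uCoeff 1 2 = 3 := by
  have h := uCoeff_natCast_self 1
  push_cast at h
  rw [uCoeff_rec]
  norm_num [h, uCoeff_zero, uCoeff_of_neg]

theorem aFInt_one_two : aFInt 1 2 = 3 := by
  simp [aFInt, uCoeff_one_two, uCoeff_zero]

theorem aFInt_two_two : aFInt 2 2 = 3 := by
  have h₁ := uCoeff_natCast_self 2
  have h₂ := uCoeff_natCast_self 1
  push_cast at h₁ h₂
  norm_num [aFInt, h₁, h₂, uCoeff_one_two]

noncomputable def aFPoly (m : ℕ) : ℚ[X] :=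
  ∑ k ∈ range (m + 1), C ((-1 : ℚ) ^ k * aF k (m : ℚ)) * X ^ (m - k)

theorem coeff_aFPoly (m i : ℕ) :
    (aFPoly m).coeff i = (-1) ^ (m + i) * aFInt ((m : ℤ) - i) m := by
  simp only [aFPoly, finsetSum_coeff, coeff_C_mul_X_pow]
  rcases le_or_gt i m with h | h
  · rw [sum_eq_single (m - i) (fun k hk _ => if_neg (by simp at hk; omega)) (by simp),
      if_pos (by omega), aF_eq_aFInt, Nat.cast_sub h,
      show m + i = m - i + 2 * i by omega, pow_add, pow_mul]
    simp
  · rw [sum_eq_zero fun k hk => if_neg (by simp at hk; omega), aFInt_of_neg (by omega),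
      mul_zero]

theorem aFPoly_rec (m : ℕ) :
    aFPoly (m + 3) = (X - C 3) * aFPoly (m + 2) + (X - C 1) * aFPoly (m + 1) := by
  ext (_ | i)
  · have h := aFInt_rec (m + 3) (m + 3)
    have h₁ := aFInt_natCast_add_two_add_one (m + 1)
    have h₂ := aFInt_natCast_add_two_add_one m
    simp only [coeff_add, mul_coeff_zero, coeff_sub, coeff_X_zero, coeff_C_zero, coeff_aFPoly]
    push_cast at h h₁ h₂ ⊢
    ring_nf at h h₁ h₂ ⊢
    rw [h₁, h₂] at h
    linear_combination (-1) ^ (m + 3) * h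
  · have h := aFInt_rec ((m : ℤ) + 2 - i) (m + 3)
    rw [coeff_add, coeff_X_sub_C_mul, coeff_X_sub_C_mul]
    simp only [coeff_aFPoly]
    push_cast at h ⊢
    ring_nf at h ⊢
    linear_combination (-1) ^ (m + i) * h

theorem aFPoly_one : aFPoly 1 = X - 1 := by
  simp [aFPoly, sum_range_succ, aF_eq_aFInt, aFInt_zero, aFInt_one_one, sub_eq_add_neg]

theorem aFPoly_two : aFPoly 2 = X ^ 2 - 3 * X + 3 := by
  simp [aFPoly, sum_range_succ, aF_eq_aFInt, aFInt_zero, aFInt_one_two, aFInt_two_two, C_ofNat,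
    sub_eq_add_neg]

/-- For every `m ≥ 1`, `t_F(m) = ∑_{k=0}^{m} (-1)^k a^F_k(m) q^{m-k}` in `ℚ[q]`. -/
theorem tFq_coefficients (m : ℕ) (hm : 1 ≤ m) :
    tFq m = ∑ k ∈ Finset.range (m + 1),
      Polynomial.C ((-1 : ℚ) ^ k * aF k (m : ℚ)) * Polynomial.X ^ (m - k) := by
  have key : ∀ n, tFq (n + 1) = aFPoly (n + 1) ∧ tFq (n + 2) = aFPoly (n + 2) := by
    intro n
    induction n with
    | zero => exact ⟨tFq_one.trans aFPoly_one.symm, tFq_two.trans aFPoly_two.symm⟩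
    | succ n ih => exact ⟨ih.2, by rw [tFq_rec, aFPoly_rec, ih.1, ih.2]⟩
  obtain ⟨n, rfl⟩ := Nat.exists_eq_add_of_le' hm
  exact (key n).1
end

section
/- For every integer k ≥ 0, the function x ↦ ã^P_k(x) from ℚ to ℚ is a polynomial function: there exists a (unique) polynomial P_k ∈ ℚ[x] with P_k(x) = ã^P_k(x) for all x ∈ ℚ; P_k has degree exactly k with leading coefficient 2^k/k!, and its constant coefficient equals 1 if k = 0 and 0 if k ≥ 1. -/
/-- The function `ã^P_k(x)`. -/
def aP (k : ℕ) (x : ℚ) : ℚ :=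
  3 ^ k * gchoose x k
  + ∑ p ∈ Finset.Icc 1 k, (-1 : ℚ) ^ p * (x / p) * gchoose (x - p - 1) ((p : ℤ) - 1) *
    ∑ r ∈ Finset.range (k - p + 1),
      3 ^ r * gchoose (x - 2 * p) r * gchoose (p : ℚ) ((k : ℤ) - p - r)


/-!
Every generalized binomial coefficient `C(x - a, n)` with `n ≥ 0` is the value at `x` of the
degree-`n` polynomial `(X - a)(X - a - 1)⋯(X - a - n + 1) / n!`, so `ã^P_k` is the value of a
polynomial of degree at most `k`. In the `p`-th summand only the term `r = k - p` reaches degree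
`k`, where it contributes `(-1)^p 3^(k-p) / (p! (k-p)!)`; together with `3^k / k!` these add up to
`(3 - 1)^k / k!` by the binomial theorem. The constant coefficient is the value `ã^P_k(0)`.
-/

open Polynomial Finset
open scoped Nat

lemma ffall_eq_eval_descPochhammer (x : ℚ) (n : ℕ) :
    ffall x n = (descPochhammer ℚ n).eval x :=
  (descPochhammer_eval_eq_prod_range n x).symm

lemma gchoose_natCast (x : ℚ) (n : ℕ) : gchoose x n = ffall x n / n ! := by
  simp [gchoose]

lemma gchoose_natCast_sub_one {p : ℕ} (hp : 1 ≤ p) (x : ℚ) :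
    gchoose x ((p : ℤ) - 1) = gchoose x (p - 1 : ℕ) := by
  rw [Nat.cast_sub hp, Nat.cast_one]

noncomputable def choosePoly (a : ℚ) (n : ℕ) : ℚ[X] :=
  C (n ! : ℚ)⁻¹ * (descPochhammer ℚ n).comp (X - C a)

lemma eval_choosePoly (a : ℚ) (n : ℕ) (x : ℚ) :
    (choosePoly a n).eval x = gchoose (x - a) n := by
  rw [choosePoly, eval_mul, eval_C, eval_comp, eval_sub, eval_X, eval_C, gchoose_natCast,
    ffall_eq_eval_descPochhammer, inv_mul_eq_div]

lemma natDegree_descPochhammer_comp (a : ℚ) (n : ℕ) :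
    ((descPochhammer ℚ n).comp (X - C a)).natDegree = n := by
  rw [natDegree_comp, descPochhammer_natDegree, natDegree_X_sub_C, mul_one]

lemma natDegree_choosePoly (a : ℚ) (n : ℕ) : (choosePoly a n).natDegree = n := by
  rw [choosePoly, natDegree_C_mul (by positivity), natDegree_descPochhammer_comp]

lemma coeff_choosePoly_self (a : ℚ) (n : ℕ) : (choosePoly a n).coeff n = (n ! : ℚ)⁻¹ := by
  have hlead := ((monic_descPochhammer ℚ n).comp_X_sub_C a).coeff_natDegree
  rw [natDegree_descPochhammer_comp] at hlead
  rw [choosePoly, coeff_C_mul, hlead, mul_one]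

lemma natDegree_sum_C_mul_choosePoly_le (a : ℚ) (c : ℕ → ℚ) (m : ℕ) :
    (∑ r ∈ range (m + 1), C (c r) * choosePoly a r).natDegree ≤ m :=
  natDegree_sum_le_of_forall_le _ _ fun r hr =>
    (natDegree_C_mul_le _ _).trans
      ((natDegree_choosePoly a r).trans_le (Nat.lt_succ_iff.mp (mem_range.mp hr)))

lemma coeff_sum_C_mul_choosePoly (a : ℚ) (c : ℕ → ℚ) (m : ℕ) :
    (∑ r ∈ range (m + 1), C (c r) * choosePoly a r).coeff m = c m / m ! := by
  rw [finsetSum_coeff, sum_eq_single_of_mem m (self_mem_range_succ m), coeff_C_mul,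
    coeff_choosePoly_self, div_eq_mul_inv]
  intro r hr hrm
  have hlt : (choosePoly a r).natDegree < m := by
    rw [natDegree_choosePoly]; have := mem_range.mp hr; omega
  rw [coeff_C_mul, coeff_eq_zero_of_natDegree_lt hlt, mul_zero]

lemma natDegree_X_mul_choosePoly_pred_le (a : ℚ) {p : ℕ} (hp : 1 ≤ p) :
    (X * choosePoly a (p - 1)).natDegree ≤ p := by
  refine natDegree_mul_le.trans ?_
  rw [natDegree_X, natDegree_choosePoly]; omega

lemma coeff_X_mul_choosePoly_pred (a : ℚ) {p : ℕ} (hp : 1 ≤ p) :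
    (X * choosePoly a (p - 1)).coeff p = ((p - 1)! : ℚ)⁻¹ := by
  obtain ⟨q, rfl⟩ := Nat.exists_eq_add_of_le' hp
  rw [coeff_X_mul, Nat.add_sub_cancel, coeff_choosePoly_self]

lemma sum_range_pow_mul_pow_div_factorial {K : Type*} [Field K] [CharZero K] (a b : K) (k : ℕ) :
    ∑ p ∈ range (k + 1), a ^ p * b ^ (k - p) / (p ! * (k - p)! : K) = (a + b) ^ k / k ! := by
  rw [add_pow, sum_div]
  refine sum_congr rfl fun p hp => ?_
  rw [Nat.cast_choose K (Nat.lt_succ_iff.mp (mem_range.mp hp))]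
  have : (k ! : K) ≠ 0 := Nat.cast_ne_zero.mpr k.factorial_ne_zero
  field_simp

noncomputable def aPPolyTerm (k p : ℕ) : ℚ[X] :=
  C ((-1 : ℚ) ^ p / p) * (X * choosePoly (p + 1) (p - 1)) *
    ∑ r ∈ range (k - p + 1), C (3 ^ r * gchoose p ((k : ℤ) - p - r)) * choosePoly (2 * p) r

noncomputable def aPPoly (k : ℕ) : ℚ[X] :=
  C (3 ^ k) * choosePoly 0 k + ∑ p ∈ Icc 1 k, aPPolyTerm k p

lemma eval_aPPoly (k : ℕ) (x : ℚ) : (aPPoly k).eval x = aP k x := by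
  simp only [aPPoly, aPPolyTerm, aP, eval_add, eval_mul, eval_C, eval_X, eval_finsetSum,
    eval_choosePoly, sub_zero]
  congr 1
  refine sum_congr rfl fun p hp => ?_
  rw [gchoose_natCast_sub_one (mem_Icc.mp hp).1, sub_add_eq_sub_sub]
  congr 1
  · ring
  · exact sum_congr rfl fun r _ => mul_right_comm _ _ _

lemma natDegree_aPPolyTerm_le {k p : ℕ} (hp : p ∈ Icc 1 k) :
    (aPPolyTerm k p).natDegree ≤ k := by
  obtain ⟨hp1, hpk⟩ := mem_Icc.mp hp
  refine natDegree_mul_le_of_le ((natDegree_C_mul_le _ _).trans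
    (natDegree_X_mul_choosePoly_pred_le _ hp1)) (natDegree_sum_C_mul_choosePoly_le _ _ _)
    |>.trans_eq (by omega)

lemma coeff_aPPolyTerm {k p : ℕ} (hp : p ∈ Icc 1 k) :
    (aPPolyTerm k p).coeff k = (-1) ^ p * 3 ^ (k - p) / (p ! * (k - p)! : ℚ) := by
  obtain ⟨hp1, hpk⟩ := mem_Icc.mp hp
  have hgchoose : gchoose p ((k : ℤ) - p - (k - p : ℕ)) = 1 := by
    rw [show (k : ℤ) - p - (k - p : ℕ) = (0 : ℕ) by omega, gchoose_natCast]
    simp [ffall]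
  have hprod := coeff_mul_add_eq_of_natDegree_le
    ((natDegree_C_mul_le ((-1 : ℚ) ^ p / p) _).trans
      (natDegree_X_mul_choosePoly_pred_le (p + 1) hp1))
    (natDegree_sum_C_mul_choosePoly_le (2 * p)
      (fun r => 3 ^ r * gchoose p ((k : ℤ) - p - r)) (k - p))
  rw [Nat.add_sub_cancel' hpk] at hprod
  rw [aPPolyTerm, hprod, coeff_C_mul, coeff_X_mul_choosePoly_pred _ hp1,
    coeff_sum_C_mul_choosePoly, hgchoose, ← Nat.mul_factorial_pred (by omega : p ≠ 0)]
  push_cast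
  field_simp

lemma natDegree_aPPoly_le (k : ℕ) : (aPPoly k).natDegree ≤ k :=
  natDegree_add_le_of_degree_le
    ((natDegree_C_mul_le _ _).trans (natDegree_choosePoly 0 k).le)
    (natDegree_sum_le_of_forall_le _ _ fun _ hp => natDegree_aPPolyTerm_le hp)

lemma coeff_aPPoly_self (k : ℕ) : (aPPoly k).coeff k = 2 ^ k / k ! := by
  rw [aPPoly, coeff_add, coeff_C_mul, coeff_choosePoly_self, finsetSum_coeff,
    sum_congr rfl fun p hp => coeff_aPPolyTerm hp, show (2 : ℚ) = -1 + 3 by norm_num,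
    ← sum_range_pow_mul_pow_div_factorial, Nat.range_succ_eq_Icc_zero,
    ← insert_Icc_add_one_left_eq_Icc k.zero_le, sum_insert (by simp)]
  simp [div_eq_mul_inv]

lemma aP_zero (k : ℕ) : aP k 0 = if k = 0 then 1 else 0 := by
  rw [aP, gchoose_natCast, ffall_eq_eval_descPochhammer, descPochhammer_eval_zero]
  split_ifs with hk <;> simp [hk]

/-- For each `k ≥ 0`, `x ↦ ã^P_k(x)` is a polynomial function: there is a unique
polynomial `P ∈ ℚ[x]` agreeing with it everywhere; `P` has degree exactly `k`,
leading coefficient `2^k/k!`, and constant coefficient `1` if `k = 0` and `0`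
if `k ≥ 1`. -/
theorem aP_polynomial (k : ℕ) :
    ∃ P : Polynomial ℚ,
      (∀ x : ℚ, P.eval x = aP k x) ∧
      (∀ Q : Polynomial ℚ, (∀ x : ℚ, Q.eval x = aP k x) → Q = P) ∧
      P.natDegree = k ∧
      P.leadingCoeff = 2 ^ k / (k.factorial : ℚ) ∧
      P.coeff 0 = (if k = 0 then 1 else 0) := by
  have hcoeff := coeff_aPPoly_self k
  have hdeg : (aPPoly k).natDegree = k :=
    natDegree_eq_of_le_of_coeff_ne_zero (natDegree_aPPoly_le k) (by rw [hcoeff]; positivity)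
  refine ⟨aPPoly k, eval_aPPoly k, fun Q hQ => Polynomial.funext fun x => ?_, hdeg, ?_, ?_⟩
  · rw [hQ, eval_aPPoly]
  · rw [leadingCoeff, hdeg, hcoeff]
  · rw [coeff_zero_eq_eval_zero, eval_aPPoly, aP_zero]
end
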